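/- If every matching of the 2-bounded 3-dimensional matching instance has size less than α(q), then every Round-UFP packing of all jobs of the hard instance uses at least (5q−3β(q)) + (β(q)−α(q))/7 rounds. -/

import Mathlib

open scoped Classical

/-- A job on the path: source vertex `s`, sink vertex `t`, demand `d`. -/
structure Job where
  s : ℤ
  t : ℤ
  d : ℤ
  deriving DecidableEq

/-- The width of a job. -/
def Job.w (j : Job) : ℤ := j.t - j.s

/-- Job `j` uses the edge `e_k` (joining vertices `k-1` and `k`) iff `s_j < k ≤ t_j`. -/
def Job.uses (j : Job) (k : ℤ) : Prop := j.s < k ∧ k ≤ j.t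

/-- Indices of the jobs of the hard instance. -/
inductive Idx (q nd : ℕ) where
  | aX  (i : Fin q)
  | aX' (i : Fin q)
  | aY  (j : Fin q)
  | aY' (j : Fin q)
  | aZ  (k : Fin q)
  | aZ' (k : Fin q)
  | b   (l : Fin (2 * q))
  | b'  (l : Fin (2 * q))
  | dummy (d : Fin nd)
  deriving DecidableEq, Fintype

namespace Hard

variable (q : ℕ)

def ρ : ℤ := 32 * q
def γ : ℤ := (ρ q) ^ 4 + 15

def x' (i : Fin q) : ℤ := ((i : ℕ) + 1) * ρ q + 1
def y' (j : Fin q) : ℤ := ((j : ℕ) + 1) * (ρ q) ^ 2 + 2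
def z' (k : Fin q) : ℤ := ((k : ℕ) + 1) * (ρ q) ^ 3 + 4
def τ' (trip : Fin q × Fin q × Fin q) : ℤ :=
  (ρ q) ^ 4 - ((trip.2.2 : ℕ) + 1) * (ρ q) ^ 3 - ((trip.2.1 : ℕ) + 1) * (ρ q) ^ 2
    - ((trip.1 : ℕ) + 1) * ρ q + 8

def alphaN : ℕ := (⌊(0.9690082645 : ℚ) * q⌋).toNat
def betaN : ℕ := (⌈(0.979338843 : ℚ) * q⌉).toNat
/-- The number of dummy jobs, `5q - 4β(q)`. -/
def ndN : ℕ := 5 * q - 4 * betaN q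

/-- The jobs of the hard instance, given the triplets `τ`. -/
def jobOf (nd : ℕ) (τ : Fin (2 * q) → Fin q × Fin q × Fin q) : Idx q nd → Job
  | .aX i  => ⟨0, 20000 * γ q - 4 * x' q i, 999 * γ q + 4 * x' q i⟩
  | .aX' i => ⟨20000 * γ q - 4 * x' q i, 40000 * γ q, 1001 * γ q - 4 * x' q i⟩
  | .aY j  => ⟨0, 20000 * γ q - 4 * y' q j, 999 * γ q + 4 * y' q j⟩
  | .aY' j => ⟨20000 * γ q - 4 * y' q j, 40000 * γ q, 1001 * γ q - 4 * y' q j⟩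
  | .aZ k  => ⟨0, 20000 * γ q - 4 * z' q k, 999 * γ q + 4 * z' q k⟩
  | .aZ' k => ⟨20000 * γ q - 4 * z' q k, 40000 * γ q, 1001 * γ q - 4 * z' q k⟩
  | .b l   => ⟨0, 19001 * γ q - 4 * τ' q (τ l), 999 * γ q + 4 * τ' q (τ l)⟩
  | .b' l  => ⟨19001 * γ q - 4 * τ' q (τ l), 40000 * γ q, 1001 * γ q - 4 * τ' q (τ l)⟩
  | .dummy _ => ⟨0, 40000 * γ q, 2997 * γ q⟩

/-- The given triplet family is a 2-bounded-occurrence 3-dimensional matching instance: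
the `2q` triplets are pairwise distinct and each element of `X ∪ Y ∪ Z` occurs in
exactly two triplets. -/
def Is2B3DM (τ : Fin (2 * q) → Fin q × Fin q × Fin q) : Prop :=
  Function.Injective τ ∧
  (∀ i : Fin q, (Finset.univ.filter fun l => (τ l).1 = i).card = 2) ∧
  (∀ j : Fin q, (Finset.univ.filter fun l => (τ l).2.1 = j).card = 2) ∧
  (∀ k : Fin q, (Finset.univ.filter fun l => (τ l).2.2 = k).card = 2)

/-- A matching: no two (distinct) chosen triplets agree in any coordinate. -/
def IsMatching (τ : Fin (2 * q) → Fin q × Fin q × Fin q) (M : Finset (Fin (2 * q))) : Prop :=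
  ∀ l ∈ M, ∀ l' ∈ M, l ≠ l' →
    (τ l).1 ≠ (τ l').1 ∧ (τ l).2.1 ≠ (τ l').2.1 ∧ (τ l).2.2 ≠ (τ l').2.2

/-- A set `S` of jobs is a feasible round if on every edge of the path the
total demand of jobs of `S` using that edge is at most the capacity `4000 γ`. -/
def FeasibleRound {ι : Type*} (job : ι → Job) (S : Finset ι) : Prop :=
  ∀ k : ℤ, 1 ≤ k → k ≤ 40000 * γ q →
    (∑ idx ∈ S, if (job idx).uses k then (job idx).d else 0) ≤ 4000 * γ q


end Hard

namespace Idx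

variable {q nd : ℕ}

/-- The job is a dummy job. -/
def isDummy : Idx q nd → Prop
  | .dummy _ => True
  | _ => False

/-- The job belongs to `A = A_X ∪ A_Y ∪ A_Z`. -/
def inA : Idx q nd → Prop
  | .aX _ | .aY _ | .aZ _ => True
  | _ => False

/-- The job belongs to `A' = A'_X ∪ A'_Y ∪ A'_Z`. -/
def inA' : Idx q nd → Prop
  | .aX' _ | .aY' _ | .aZ' _ => True
  | _ => False

/-- The job belongs to `B`. -/
def inB : Idx q nd → Prop
  | .b _ => True
  | _ => False

/-- The job belongs to `B'`. -/
def inB' : Idx q nd → Prop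
  | .b' _ => True
  | _ => False

/-- The job belongs to `A ∪ B`. -/
def inAB : Idx q nd → Prop
  | .aX _ | .aY _ | .aZ _ | .b _ => True
  | _ => False

/-- The job belongs to `A' ∪ B'`. -/
def inA'B' : Idx q nd → Prop
  | .aX' _ | .aY' _ | .aZ' _ | .b' _ => True
  | _ => False

end Idx


namespace Aux
open Hard

variable {q nd : ℕ}

lemma rho_def : ρ q = 32 * (q:ℤ) := rfl

lemma rho_ge (hq : 1 ≤ q) : 32 ≤ ρ q := by
  have : (1:ℤ) ≤ (q:ℤ) := by exact_mod_cast hq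
  rw [rho_def]; linarith

lemma gamma_def : γ q = (ρ q)^4 + 15 := rfl

lemma gamma_pos (hq : 1 ≤ q) : 0 < γ q := by
  have h := rho_ge (q := q) hq
  have : (0:ℤ) ≤ (ρ q)^4 := by positivity
  rw [gamma_def]; linarith

lemma rho4_big (hq : 1 ≤ q) : 32^4 ≤ (ρ q)^4 := by
  have h := rho_ge (q := q) hq
  have h0 : (0:ℤ) ≤ 32 := by norm_num
  exact pow_le_pow_left₀ h0 h 4


lemma rho_sq_ge (hq : 1 ≤ q) : 1024 ≤ (ρ q)^2 := by
  have hρ := rho_ge (q := q) hq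
  nlinarith

lemma rho_sq_le (hq : 1 ≤ q) : (ρ q)^2 * 1024 ≤ (ρ q)^4 := by
  have h2 := rho_sq_ge (q := q) hq
  have h0 : (0:ℤ) ≤ (ρ q)^2 := sq_nonneg _
  nlinarith [mul_le_mul_of_nonneg_left h2 h0]

lemma rho_le_sq (hq : 1 ≤ q) : (ρ q) * 1024 ≤ (ρ q)^3 := by
  have h2 := rho_sq_ge (q := q) hq
  have hρ := rho_ge (q := q) hq
  have h0 : (0:ℤ) ≤ (ρ q) := by linarith
  nlinarith [mul_le_mul_of_nonneg_left h2 h0]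

lemma hx (i : Fin q) : 1 ≤ x' q i ∧ 16 * x' q i ≤ γ q ∧ x' q i < (ρ q)^2 := by
  have hq : 1 ≤ q := i.pos
  have hiq : ((i:ℕ):ℤ) + 1 ≤ (q:ℤ) := by exact_mod_cast i.isLt
  have hi0 : (0:ℤ) ≤ ((i:ℕ):ℤ) := by positivity
  have hρ := rho_ge (q := q) hq
  have h4 := rho4_big (q := q) hq
  have hρq : ρ q = 32 * (q:ℤ) := rfl
  have hρ0 : (0:ℤ) ≤ ρ q := by linarith
  have hprod : (((i:ℕ):ℤ) + 1) * ρ q ≤ (q:ℤ) * ρ q :=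
    mul_le_mul_of_nonneg_right hiq hρ0
  have hq32 : 32 * ((q:ℤ) * ρ q) = (ρ q)^2 := by rw [hρq]; ring
  have hsq := rho_sq_le (q := q) hq
  unfold x' γ
  refine ⟨by nlinarith, by nlinarith, by nlinarith⟩

lemma hy (j : Fin q) : (ρ q)^2 < y' q j ∧ 16 * y' q j ≤ γ q ∧ y' q j < (ρ q)^3 := by
  have hq : 1 ≤ q := j.pos
  have hjq : ((j:ℕ):ℤ) + 1 ≤ (q:ℤ) := by exact_mod_cast j.isLt
  have hi0 : (0:ℤ) ≤ ((j:ℕ):ℤ) := by positivity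
  have hρ := rho_ge (q := q) hq
  have h4 := rho4_big (q := q) hq
  have hρq : ρ q = 32 * (q:ℤ) := rfl
  have hρ0 : (0:ℤ) ≤ ρ q := by linarith
  have hρ20 : (0:ℤ) ≤ (ρ q)^2 := sq_nonneg _
  have hprod : (((j:ℕ):ℤ) + 1) * (ρ q)^2 ≤ (q:ℤ) * (ρ q)^2 :=
    mul_le_mul_of_nonneg_right hjq hρ20
  have hq32 : 32 * ((q:ℤ) * (ρ q)^2) = (ρ q)^3 := by rw [hρq]; ring
  have hsq := rho_sq_le (q := q) hq
  have hc := rho_le_sq (q := q) hq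
  unfold y' γ
  refine ⟨by nlinarith, by nlinarith, by nlinarith⟩

lemma hz (k : Fin q) : (ρ q)^3 < z' q k ∧ 16 * z' q k ≤ γ q := by
  have hq : 1 ≤ q := k.pos
  have hiq : ((k:ℕ):ℤ) + 1 ≤ (q:ℤ) := by exact_mod_cast k.isLt
  have hi0 : (0:ℤ) ≤ ((k:ℕ):ℤ) := by positivity
  have hρ := rho_ge (q := q) hq
  have h4 := rho4_big (q := q) hq
  have hρq : ρ q = 32 * (q:ℤ) := rfl
  have hρ0 : (0:ℤ) ≤ ρ q := by linarith
  have hρ30 : (0:ℤ) ≤ (ρ q)^3 := by positivity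
  have hprod : (((k:ℕ):ℤ) + 1) * (ρ q)^3 ≤ (q:ℤ) * (ρ q)^3 :=
    mul_le_mul_of_nonneg_right hiq hρ30
  have hq32 : 32 * ((q:ℤ) * (ρ q)^3) = (ρ q)^4 := by rw [hρq]; ring
  have hsq := rho_sq_le (q := q) hq
  unfold z' γ
  refine ⟨by nlinarith, by nlinarith⟩

lemma ht (t : Fin q × Fin q × Fin q) :
    3 * γ q ≤ 4 * τ' q t ∧ 4 * τ' q t ≤ 4 * γ q := by
  obtain ⟨i, j, k⟩ := t
  have hq : 1 ≤ q := i.pos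
  have hiq : ((i:ℕ):ℤ) + 1 ≤ (q:ℤ) := by exact_mod_cast i.isLt
  have hjq : ((j:ℕ):ℤ) + 1 ≤ (q:ℤ) := by exact_mod_cast j.isLt
  have hkq : ((k:ℕ):ℤ) + 1 ≤ (q:ℤ) := by exact_mod_cast k.isLt
  have hi0 : (0:ℤ) ≤ ((i:ℕ):ℤ) := by positivity
  have hj0 : (0:ℤ) ≤ ((j:ℕ):ℤ) := by positivity
  have hk0 : (0:ℤ) ≤ ((k:ℕ):ℤ) := by positivity
  have hρ := rho_ge (q := q) hq
  have h4 := rho4_big (q := q) hq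
  have hρq : ρ q = 32 * (q:ℤ) := rfl
  have hρ0 : (0:ℤ) ≤ ρ q := by linarith
  have hρ20 : (0:ℤ) ≤ (ρ q)^2 := sq_nonneg _
  have hρ30 : (0:ℤ) ≤ (ρ q)^3 := by positivity
  have hp1 : (((i:ℕ):ℤ) + 1) * ρ q ≤ (q:ℤ) * ρ q := mul_le_mul_of_nonneg_right hiq hρ0
  have hp2 : (((j:ℕ):ℤ) + 1) * (ρ q)^2 ≤ (q:ℤ) * (ρ q)^2 := mul_le_mul_of_nonneg_right hjq hρ20
  have hp3 : (((k:ℕ):ℤ) + 1) * (ρ q)^3 ≤ (q:ℤ) * (ρ q)^3 := mul_le_mul_of_nonneg_right hkq hρ30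
  have hq1 : 32 * ((q:ℤ) * ρ q) = (ρ q)^2 := by rw [hρq]; ring
  have hq2 : 32 * ((q:ℤ) * (ρ q)^2) = (ρ q)^3 := by rw [hρq]; ring
  have hq3 : 32 * ((q:ℤ) * (ρ q)^3) = (ρ q)^4 := by rw [hρq]; ring
  have hsq := rho_sq_le (q := q) hq
  have hc := rho_le_sq (q := q) hq
  have hl1 : 1 ≤ (((i:ℕ):ℤ) + 1) * ρ q := by nlinarith
  have hl2 : 1 ≤ (((j:ℕ):ℤ) + 1) * (ρ q)^2 := by nlinarith
  have hl3 : 1 ≤ (((k:ℕ):ℤ) + 1) * (ρ q)^3 := by nlinarith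
  unfold τ' γ
  constructor
  · nlinarith
  · nlinarith

end Aux
namespace Aux
open Hard

variable {q nd : ℕ}

/-- The "value" of a job index. -/
def val (τv : Fin (2 * q) → Fin q × Fin q × Fin q) : Idx q nd → ℤ
  | .aX i => x' q i
  | .aX' i => x' q i
  | .aY j => y' q j
  | .aY' j => y' q j
  | .aZ k => z' q k
  | .aZ' k => z' q k
  | .b l => τ' q (τv l)
  | .b' l => τ' q (τv l)
  | .dummy _ => 0

variable (τv : Fin (2 * q) → Fin q × Fin q × Fin q)

lemma job_inA {idx : Idx q nd} (h : idx.inA) :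
    Hard.jobOf q nd τv idx =
      ⟨0, 20000 * γ q - 4 * val τv idx, 999 * γ q + 4 * val τv idx⟩ := by
  cases idx <;> simp [Idx.inA] at h <;> rfl

lemma job_inA' {idx : Idx q nd} (h : idx.inA') :
    Hard.jobOf q nd τv idx =
      ⟨20000 * γ q - 4 * val τv idx, 40000 * γ q, 1001 * γ q - 4 * val τv idx⟩ := by
  cases idx <;> simp [Idx.inA'] at h <;> rfl

lemma job_inB {idx : Idx q nd} (h : idx.inB) :
    Hard.jobOf q nd τv idx =
      ⟨0, 19001 * γ q - 4 * val τv idx, 999 * γ q + 4 * val τv idx⟩ := by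
  cases idx <;> simp [Idx.inB] at h <;> rfl

lemma job_inB' {idx : Idx q nd} (h : idx.inB') :
    Hard.jobOf q nd τv idx =
      ⟨19001 * γ q - 4 * val τv idx, 40000 * γ q, 1001 * γ q - 4 * val τv idx⟩ := by
  cases idx <;> simp [Idx.inB'] at h <;> rfl

lemma job_dummy {idx : Idx q nd} (h : idx.isDummy) :
    Hard.jobOf q nd τv idx = ⟨0, 40000 * γ q, 2997 * γ q⟩ := by
  cases idx <;> simp [Idx.isDummy] at h <;> rfl

lemma val_inA {idx : Idx q nd} (h : idx.inA ∨ idx.inA') (hq : 1 ≤ q) :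
    1 ≤ val τv idx ∧ 16 * val τv idx ≤ γ q := by
  have hsq := rho_sq_ge (q := q) hq
  have hρ := rho_ge (q := q) hq
  have h3 : (ρ q) * 1024 ≤ (ρ q)^3 := rho_le_sq hq
  have hρ3 : (32:ℤ) * 1024 ≤ (ρ q)^3 := by
    have := rho_le_sq (q := q) hq; nlinarith
  rcases idx with i|i|j|j|k|k|l|l|d
  · exact ⟨(hx i).1, (hx i).2.1⟩
  · exact ⟨(hx i).1, (hx i).2.1⟩
  · exact ⟨by have := (hy j).1; simp only [val]; linarith, (hy j).2.1⟩
  · exact ⟨by have := (hy j).1; simp only [val]; linarith, (hy j).2.1⟩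
  · exact ⟨by have := (hz k).1; simp only [val]; linarith, (hz k).2⟩
  · exact ⟨by have := (hz k).1; simp only [val]; linarith, (hz k).2⟩
  · simp [Idx.inA, Idx.inA'] at h
  · simp [Idx.inA, Idx.inA'] at h
  · simp [Idx.inA, Idx.inA'] at h

lemma val_inB {idx : Idx q nd} (h : idx.inB ∨ idx.inB') :
    3 * γ q ≤ 4 * val τv idx ∧ 4 * val τv idx ≤ 4 * γ q := by
  cases idx <;> simp [Idx.inB, Idx.inB'] at h <;>
    (rename_i l; exact ht (τv l))

lemma dem_ge (hq : 1 ≤ q) (idx : Idx q nd) :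
    997 * γ q ≤ (Hard.jobOf q nd τv idx).d := by
  have hγ := gamma_pos (q := q) hq
  rcases idx with i|i|j|j|k|k|l|l|d
  · obtain ⟨h1, h2⟩ := val_inA τv (idx := (.aX i : Idx q nd)) (Or.inl trivial) hq
    show 997 * γ q ≤ 999 * γ q + 4 * x' q i
    simp only [val] at h1 h2; linarith
  · obtain ⟨h1, h2⟩ := val_inA τv (idx := (.aX' i : Idx q nd)) (Or.inr trivial) hq
    show 997 * γ q ≤ 1001 * γ q - 4 * x' q i
    simp only [val] at h1 h2; linarith
  · obtain ⟨h1, h2⟩ := val_inA τv (idx := (.aY j : Idx q nd)) (Or.inl trivial) hq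
    show 997 * γ q ≤ 999 * γ q + 4 * y' q j
    simp only [val] at h1 h2; linarith
  · obtain ⟨h1, h2⟩ := val_inA τv (idx := (.aY' j : Idx q nd)) (Or.inr trivial) hq
    show 997 * γ q ≤ 1001 * γ q - 4 * y' q j
    simp only [val] at h1 h2; linarith
  · obtain ⟨h1, h2⟩ := val_inA τv (idx := (.aZ k : Idx q nd)) (Or.inl trivial) hq
    show 997 * γ q ≤ 999 * γ q + 4 * z' q k
    simp only [val] at h1 h2; linarith
  · obtain ⟨h1, h2⟩ := val_inA τv (idx := (.aZ' k : Idx q nd)) (Or.inr trivial) hq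
    show 997 * γ q ≤ 1001 * γ q - 4 * z' q k
    simp only [val] at h1 h2; linarith
  · obtain ⟨h1, h2⟩ := ht (q := q) (τv l)
    show 997 * γ q ≤ 999 * γ q + 4 * τ' q (τv l)
    linarith
  · obtain ⟨h1, h2⟩ := ht (q := q) (τv l)
    show 997 * γ q ≤ 1001 * γ q - 4 * τ' q (τv l)
    linarith
  · show 997 * γ q ≤ 2997 * γ q
    linarith

lemma dem_nonneg (hq : 1 ≤ q) (idx : Idx q nd) : 0 ≤ (Hard.jobOf q nd τv idx).d := by
  have := dem_ge τv hq idx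
  have hγ := gamma_pos (q := q) hq
  linarith

/-- digit extraction -/
lemma digit_zero {R a : ℤ} (hR : 0 < R) (h : |a| < R) {W : ℤ} (hw : a = R * W) :
    a = 0 ∧ W = 0 := by
  rcases eq_or_ne W 0 with h0 | h0
  · exact ⟨by simp [hw, h0], h0⟩
  · exfalso
    have h1 : 1 ≤ |W| := Int.one_le_abs h0
    have : R * 1 ≤ R * |W| := by
      apply mul_le_mul_of_nonneg_left h1 (le_of_lt hR)
    have habs : |a| = R * |W| := by
      rw [hw, abs_mul, abs_of_pos hR]
    omega

lemma digits4 {R c0 c1 c2 c3 : ℤ} (hR : 0 < R) (h0 : |c0| < R) (h1 : |c1| < R)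
    (h2 : |c2| < R) (h : c0 + c1 * R + c2 * R^2 + c3 * R^3 = 0) :
    c0 = 0 ∧ c1 = 0 ∧ c2 = 0 ∧ c3 = 0 := by
  have e0 : c0 = R * (-(c1 + c2 * R + c3 * R^2)) := by linear_combination h
  obtain ⟨hc0, hW0⟩ := digit_zero hR h0 e0
  have e1 : c1 = R * (-(c2 + c3 * R)) := by linear_combination -hW0
  obtain ⟨hc1, hW1⟩ := digit_zero hR h1 e1
  have e2 : c2 = R * (-c3) := by linear_combination -hW1
  obtain ⟨hc2, hW2⟩ := digit_zero hR h2 e2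
  exact ⟨hc0, hc1, hc2, by omega⟩

/-- digit components of `A`-jobs -/
def da : Idx q nd → ℤ
  | .aX i => (i : ℕ) + 1
  | _ => 0

def db : Idx q nd → ℤ
  | .aY j => (j : ℕ) + 1
  | _ => 0

def dc : Idx q nd → ℤ
  | .aZ k => (k : ℕ) + 1
  | _ => 0

def dd : Idx q nd → ℤ
  | .aX _ => 1
  | .aY _ => 2
  | .aZ _ => 4
  | _ => 0

lemma val_repr {idx : Idx q nd} (h : idx.inA) :
    val τv idx = dd idx + da idx * ρ q + db idx * (ρ q)^2 + dc idx * (ρ q)^3 := by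
  cases idx <;> simp [Idx.inA] at h <;>
    simp [val, x', y', z', da, db, dc, dd] <;> ring

lemma da_bounds (idx : Idx q nd) : 0 ≤ da idx ∧ da idx ≤ q := by
  cases idx <;> simp [da] <;>
    (rename_i i; have := i.isLt; omega)

lemma db_bounds (idx : Idx q nd) : 0 ≤ db idx ∧ db idx ≤ q := by
  cases idx <;> simp [db] <;>
    (rename_i i; have := i.isLt; omega)

lemma dc_bounds (idx : Idx q nd) : 0 ≤ dc idx ∧ dc idx ≤ q := by
  cases idx <;> simp [dc] <;>
    (rename_i i; have := i.isLt; omega)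

lemma dd_inA {idx : Idx q nd} (h : idx.inA) : dd idx = 1 ∨ dd idx = 2 ∨ dd idx = 4 := by
  cases idx <;> simp [Idx.inA] at h <;> simp [dd]

lemma dd_eq_one {idx : Idx q nd} (h : dd idx = 1) : ∃ i, idx = .aX i := by
  cases idx <;> simp [dd] at h <;> exact ⟨_, rfl⟩

lemma dd_eq_two {idx : Idx q nd} (h : dd idx = 2) : ∃ j, idx = .aY j := by
  cases idx <;> simp [dd] at h <;> exact ⟨_, rfl⟩

lemma dd_eq_four {idx : Idx q nd} (h : dd idx = 4) : ∃ k, idx = .aZ k := by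
  cases idx <;> simp [dd] at h <;> exact ⟨_, rfl⟩

end Aux
namespace Aux
open Hard Finset

variable {q nd : ℕ} (τv : Fin (2 * q) → Fin q × Fin q × Fin q)

lemma dem_left_ge {idx : Idx q nd} (hq : 1 ≤ q) (h : idx.inAB) :
    999 * γ q ≤ (Hard.jobOf q nd τv idx).d ∧
    (Hard.jobOf q nd τv idx).d = 999 * γ q + 4 * val τv idx := by
  have hγ := gamma_pos (q := q) hq
  rcases idx with i|i|j|j|k|k|l|l|d <;> simp only [Idx.inAB] at h
  · have := (val_inA τv (idx := (.aX i : Idx q nd)) (Or.inl trivial) hq)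
    exact ⟨by show _ ≤ 999 * γ q + 4 * x' q i; simp only [val] at this; linarith, rfl⟩
  · have := (val_inA τv (idx := (.aY j : Idx q nd)) (Or.inl trivial) hq)
    exact ⟨by show _ ≤ 999 * γ q + 4 * y' q j; simp only [val] at this; linarith, rfl⟩
  · have := (val_inA τv (idx := (.aZ k : Idx q nd)) (Or.inl trivial) hq)
    exact ⟨by show _ ≤ 999 * γ q + 4 * z' q k; simp only [val] at this; linarith, rfl⟩
  · have := ht (q := q) (τv l)
    exact ⟨by show _ ≤ 999 * γ q + 4 * τ' q (τv l); linarith [this.1], rfl⟩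

lemma dem_right_eq {idx : Idx q nd} (h : idx.inA'B') :
    (Hard.jobOf q nd τv idx).d = 1001 * γ q - 4 * val τv idx := by
  rcases idx with i|i|j|j|k|k|l|l|d <;> simp only [Idx.inA'B'] at h <;> rfl

lemma class_total (idx : Idx q nd) : idx.inAB ∨ idx.inA'B' ∨ idx.isDummy := by
  rcases idx with i|i|j|j|k|k|l|l|d <;>
    simp [Idx.inAB, Idx.inA'B', Idx.isDummy]

/- ### uses lemmas -/

section Uses

lemma uses_E1 (hq : 1 ≤ q) {idx : Idx q nd} (h : idx.inAB ∨ idx.isDummy) :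
    (Hard.jobOf q nd τv idx).uses 1 := by
  have hγ := gamma_pos (q := q) hq
  rcases h with h | h
  · rcases idx with i|i|j|j|k|k|l|l|d <;> simp only [Idx.inAB] at h
    · have := val_inA τv (idx := (.aX i : Idx q nd)) (Or.inl trivial) hq
      exact ⟨by show (0:ℤ) < 1; norm_num, by simp only [val] at this; show (1:ℤ) ≤ 20000 * γ q - 4 * x' q i; linarith⟩
    · have := val_inA τv (idx := (.aY j : Idx q nd)) (Or.inl trivial) hq
      exact ⟨by show (0:ℤ) < 1; norm_num, by simp only [val] at this; show (1:ℤ) ≤ 20000 * γ q - 4 * y' q j; linarith⟩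
    · have := val_inA τv (idx := (.aZ k : Idx q nd)) (Or.inl trivial) hq
      exact ⟨by show (0:ℤ) < 1; norm_num, by simp only [val] at this; show (1:ℤ) ≤ 20000 * γ q - 4 * z' q k; linarith⟩
    · have := ht (q := q) (τv l)
      exact ⟨by show (0:ℤ) < 1; norm_num, by show (1:ℤ) ≤ 19001 * γ q - 4 * τ' q (τv l); linarith [this.2]⟩
  · rw [job_dummy τv h]
    exact ⟨by show (0:ℤ) < 1; norm_num, by show (1:ℤ) ≤ 40000 * γ q; linarith⟩

lemma uses_E2 (hq : 1 ≤ q) {idx : Idx q nd} (h : idx.inA'B' ∨ idx.isDummy) :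
    (Hard.jobOf q nd τv idx).uses (40000 * γ q) := by
  have hγ := gamma_pos (q := q) hq
  rcases h with h | h
  · rcases idx with i|i|j|j|k|k|l|l|d <;> simp only [Idx.inA'B'] at h
    · have := val_inA τv (idx := (.aX' i : Idx q nd)) (Or.inr trivial) hq
      simp only [val] at this
      exact ⟨by show 20000 * γ q - 4 * x' q i < _; linarith, le_refl _⟩
    · have := val_inA τv (idx := (.aY' j : Idx q nd)) (Or.inr trivial) hq
      simp only [val] at this
      exact ⟨by show 20000 * γ q - 4 * y' q j < _; linarith, le_refl _⟩
    · have := val_inA τv (idx := (.aZ' k : Idx q nd)) (Or.inr trivial) hq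
      simp only [val] at this
      exact ⟨by show 20000 * γ q - 4 * z' q k < _; linarith, le_refl _⟩
    · have := ht (q := q) (τv l)
      exact ⟨by show 19001 * γ q - 4 * τ' q (τv l) < _; linarith [this.1], le_refl _⟩
  · rw [job_dummy τv h]
    exact ⟨by show (0:ℤ) < 40000 * γ q; linarith, le_refl _⟩

lemma uses_E3_A (hq : 1 ≤ q) {idx : Idx q nd} (h : idx.inA) :
    (Hard.jobOf q nd τv idx).uses (19500 * γ q) := by
  have hγ := gamma_pos (q := q) hq
  have hv := val_inA τv (idx := idx) (Or.inl h) hq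
  rw [job_inA τv h]
  exact ⟨by show (0:ℤ) < _; linarith, by show _ ≤ 20000 * γ q - 4 * val τv idx; linarith⟩

lemma uses_E3_B' (hq : 1 ≤ q) {idx : Idx q nd} (h : idx.inB') :
    (Hard.jobOf q nd τv idx).uses (19500 * γ q) := by
  have hγ := gamma_pos (q := q) hq
  have hv := val_inB τv (idx := idx) (Or.inr h)
  rw [job_inB' τv h]
  exact ⟨by show 19001 * γ q - 4 * val τv idx < _; linarith, by show _ ≤ 40000 * γ q; linarith⟩

lemma uses_E4_A' (hq : 1 ≤ q) {idx : Idx q nd} (h : idx.inA') :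
    (Hard.jobOf q nd τv idx).uses (20001 * γ q) := by
  have hγ := gamma_pos (q := q) hq
  have hv := val_inA τv (idx := idx) (Or.inr h) hq
  rw [job_inA' τv h]
  exact ⟨by show 20000 * γ q - 4 * val τv idx < _; linarith, by show _ ≤ 40000 * γ q; linarith⟩

lemma uses_E4_B' (hq : 1 ≤ q) {idx : Idx q nd} (h : idx.inB') :
    (Hard.jobOf q nd τv idx).uses (20001 * γ q) := by
  have hγ := gamma_pos (q := q) hq
  have hv := val_inB τv (idx := idx) (Or.inr h)
  rw [job_inB' τv h]
  exact ⟨by show 19001 * γ q - 4 * val τv idx < _; linarith, by show _ ≤ 40000 * γ q; linarith⟩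

variable {u : ℤ}

lemma uses_E6_A (hq : 1 ≤ q) {idx : Idx q nd} (h : idx.inA) (hu1 : 1 ≤ u) (hu2 : u ≤ γ q)
    (hlt : val τv idx < u) :
    (Hard.jobOf q nd τv idx).uses (20000 * γ q - 4 * u + 1) := by
  have hγ := gamma_pos (q := q) hq
  rw [job_inA τv h]
  exact ⟨by show (0:ℤ) < _; linarith, by show _ ≤ 20000 * γ q - 4 * val τv idx; linarith⟩

lemma uses_E6_A' (hq : 1 ≤ q) {idx : Idx q nd} (h : idx.inA') (hu1 : 1 ≤ u) (hu2 : u ≤ γ q)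
    (hge : u ≤ val τv idx) :
    (Hard.jobOf q nd τv idx).uses (20000 * γ q - 4 * u + 1) := by
  have hγ := gamma_pos (q := q) hq
  rw [job_inA' τv h]
  exact ⟨by show 20000 * γ q - 4 * val τv idx < _; linarith, by show _ ≤ 40000 * γ q; linarith⟩

lemma uses_E6_B' (hq : 1 ≤ q) {idx : Idx q nd} (h : idx.inB') (hu1 : 1 ≤ u) (hu2 : u ≤ γ q) :
    (Hard.jobOf q nd τv idx).uses (20000 * γ q - 4 * u + 1) := by
  have hγ := gamma_pos (q := q) hq
  have hv := val_inB τv (idx := idx) (Or.inr h)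
  rw [job_inB' τv h]
  exact ⟨by show 19001 * γ q - 4 * val τv idx < _; linarith, by show _ ≤ 40000 * γ q; linarith⟩

end Uses

/- ### round machinery -/

variable {K : ℕ} (round : Idx q nd → Fin K)

lemma round_sum_le (hq : 1 ≤ q) (r : Fin K)
    (hr : Hard.FeasibleRound q (Hard.jobOf q nd τv)
      (Finset.univ.filter fun idx => round idx = r))
    {k : ℤ} (hk1 : 1 ≤ k) (hk2 : k ≤ 40000 * γ q)
    (T : Finset (Idx q nd)) (hT : ∀ idx ∈ T, round idx = r)
    (hU : ∀ idx ∈ T, (Hard.jobOf q nd τv idx).uses k) :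
    ∑ idx ∈ T, (Hard.jobOf q nd τv idx).d ≤ 4000 * γ q := by
  have hsub : T ⊆ Finset.univ.filter fun idx => round idx = r := by
    intro i hi
    simp [hT i hi]
  calc ∑ idx ∈ T, (Hard.jobOf q nd τv idx).d
      = ∑ idx ∈ T, (if (Hard.jobOf q nd τv idx).uses k then (Hard.jobOf q nd τv idx).d else 0) :=
        Finset.sum_congr rfl fun i hi => (if_pos (hU i hi)).symm
    _ ≤ ∑ idx ∈ Finset.univ.filter fun idx => round idx = r,
          (if (Hard.jobOf q nd τv idx).uses k then (Hard.jobOf q nd τv idx).d else 0) := by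
        apply Finset.sum_le_sum_of_subset_of_nonneg hsub
        intro i _ _
        split
        · exact dem_nonneg τv hq i
        · exact le_refl 0
    _ ≤ 4000 * γ q := hr k hk1 hk2

lemma round_card_le_four (hq : 1 ≤ q) (r : Fin K)
    (hr : Hard.FeasibleRound q (Hard.jobOf q nd τv)
      (Finset.univ.filter fun idx => round idx = r))
    {k : ℤ} (hk1 : 1 ≤ k) (hk2 : k ≤ 40000 * γ q)
    (T : Finset (Idx q nd)) (hT : ∀ idx ∈ T, round idx = r)
    (hU : ∀ idx ∈ T, (Hard.jobOf q nd τv idx).uses k) :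
    T.card ≤ 4 := by
  have hγ := gamma_pos (q := q) hq
  have hsum := round_sum_le τv round hq r hr hk1 hk2 T hT hU
  have hlow : (T.card : ℤ) * (997 * γ q) ≤ ∑ idx ∈ T, (Hard.jobOf q nd τv idx).d := by
    have := Finset.card_nsmul_le_sum T (fun idx => (Hard.jobOf q nd τv idx).d)
      (997 * γ q) (fun i _ => dem_ge τv hq i)
    simpa [nsmul_eq_mul] using this
  by_contra hc
  push_neg at hc
  have h5 : (5 : ℤ) ≤ (T.card : ℤ) := by exact_mod_cast hc
  nlinarith

end Aux
namespace Aux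
open Hard Finset

variable {q nd : ℕ} (τv : Fin (2 * q) → Fin q × Fin q × Fin q)

lemma x'_inj {i i' : Fin q} (h : x' q i = x' q i') : i = i' := by
  have hq : 1 ≤ q := i.pos
  have hρ : (0:ℤ) < ρ q := by have := rho_ge (q := q) hq; linarith
  have h2 : (((i:ℕ):ℤ)+1) * ρ q = (((i':ℕ):ℤ)+1) * ρ q := by
    unfold x' at h; linarith
  have h3 : (((i:ℕ):ℤ)+1) = (((i':ℕ):ℤ)+1) := mul_right_cancel₀ (ne_of_gt hρ) h2
  have h4 : ((i:ℕ):ℤ) = ((i':ℕ):ℤ) := by linarith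
  have : (i:ℕ) = (i':ℕ) := by exact_mod_cast h4
  exact Fin.ext this

lemma y'_inj {i i' : Fin q} (h : y' q i = y' q i') : i = i' := by
  have hq : 1 ≤ q := i.pos
  have hρ : (0:ℤ) < (ρ q)^2 := by have := rho_sq_ge (q := q) hq; linarith
  have h2 : (((i:ℕ):ℤ)+1) * (ρ q)^2 = (((i':ℕ):ℤ)+1) * (ρ q)^2 := by
    unfold y' at h; linarith
  have h3 : (((i:ℕ):ℤ)+1) = (((i':ℕ):ℤ)+1) := mul_right_cancel₀ (ne_of_gt hρ) h2
  have h4 : ((i:ℕ):ℤ) = ((i':ℕ):ℤ) := by linarith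
  have : (i:ℕ) = (i':ℕ) := by exact_mod_cast h4
  exact Fin.ext this

lemma z'_inj {i i' : Fin q} (h : z' q i = z' q i') : i = i' := by
  have hq : 1 ≤ q := i.pos
  have hρ : (0:ℤ) < (ρ q)^3 := by
    have h1 := rho_le_sq (q := q) hq
    have := rho_ge (q := q) hq; linarith
  have h2 : (((i:ℕ):ℤ)+1) * (ρ q)^3 = (((i':ℕ):ℤ)+1) * (ρ q)^3 := by
    unfold z' at h; linarith
  have h3 : (((i:ℕ):ℤ)+1) = (((i':ℕ):ℤ)+1) := mul_right_cancel₀ (ne_of_gt hρ) h2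
  have h4 : ((i:ℕ):ℤ) = ((i':ℕ):ℤ) := by linarith
  have : (i:ℕ) = (i':ℕ) := by exact_mod_cast h4
  exact Fin.ext this

lemma rho_cube_between (hq : 1 ≤ q) : (ρ q)^2 < (ρ q)^3 := by
  have h2 := rho_sq_ge (q := q) hq
  have hρ := rho_ge (q := q) hq
  nlinarith

lemma x'_ne_y' (i j : Fin q) : x' q i ≠ y' q j := by
  have h1 := (hx i).2.2
  have h2 := (hy j).1
  intro h; rw [h] at h1; linarith

lemma x'_ne_z' (i k : Fin q) : x' q i ≠ z' q k := by
  have hq : 1 ≤ q := i.pos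
  have h1 := (hx i).2.2
  have h2 := (hz k).1
  have h3 := rho_cube_between (q := q) hq
  intro h; rw [h] at h1; linarith

lemma y'_ne_z' (j k : Fin q) : y' q j ≠ z' q k := by
  have h1 := (hy j).2.2
  have h2 := (hz k).1
  intro h; rw [h] at h1; linarith

lemma val_inj_A {a b : Idx q nd} (ha : a.inA) (hb : b.inA)
    (h : val τv a = val τv b) : a = b := by
  rcases a with i|i|j|j|k|k|l|l|d <;> simp only [Idx.inA] at ha <;>
  rcases b with i'|i'|j'|j'|k'|k'|l'|l'|d' <;> simp only [Idx.inA] at hb <;>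
  simp only [val] at h
  · rw [x'_inj h]
  · exact absurd h (x'_ne_y' i j')
  · exact absurd h (x'_ne_z' i k')
  · exact absurd h.symm (x'_ne_y' i' j)
  · rw [y'_inj h]
  · exact absurd h (y'_ne_z' j k')
  · exact absurd h.symm (x'_ne_z' i' k)
  · exact absurd h.symm (y'_ne_z' j' k)
  · rw [z'_inj h]

lemma val_inj_A' {a b : Idx q nd} (ha : a.inA') (hb : b.inA')
    (h : val τv a = val τv b) : a = b := by
  rcases a with i|i|j|j|k|k|l|l|d <;> simp only [Idx.inA'] at ha <;>
  rcases b with i'|i'|j'|j'|k'|k'|l'|l'|d' <;> simp only [Idx.inA'] at hb <;>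
  simp only [val] at h
  · rw [x'_inj h]
  · exact absurd h (x'_ne_y' i j')
  · exact absurd h (x'_ne_z' i k')
  · exact absurd h.symm (x'_ne_y' i' j)
  · rw [y'_inj h]
  · exact absurd h (y'_ne_z' j k')
  · exact absurd h.symm (x'_ne_z' i' k)
  · exact absurd h.symm (y'_ne_z' j' k)
  · rw [z'_inj h]

/-- extract a sorted listing of a 3-element finset with injective values -/
lemma exists_sorted3 {ι : Type*} [DecidableEq ι] (T : Finset ι) (f : ι → ℤ)
    (h3 : T.card = 3)
    (hinj : ∀ a ∈ T, ∀ b ∈ T, f a = f b → a = b) :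
    ∃ a b c, T = {a, b, c} ∧ f a < f b ∧ f b < f c := by
  obtain ⟨x, y, z, hxy, hxz, hyz, rfl⟩ := Finset.card_eq_three.mp h3
  have hxm : x ∈ ({x, y, z} : Finset ι) := by simp
  have hym : y ∈ ({x, y, z} : Finset ι) := by simp
  have hzm : z ∈ ({x, y, z} : Finset ι) := by simp
  have hfxy : f x ≠ f y := fun h => hxy (hinj _ hxm _ hym h)
  have hfxz : f x ≠ f z := fun h => hxz (hinj _ hxm _ hzm h)
  have hfyz : f y ≠ f z := fun h => hyz (hinj _ hym _ hzm h)
  rcases lt_or_gt_of_ne hfxy with h1 | h1 <;>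
  rcases lt_or_gt_of_ne hfxz with h2 | h2 <;>
  rcases lt_or_gt_of_ne hfyz with h3' | h3'
  · exact ⟨x, y, z, rfl, h1, h3'⟩
  · exact ⟨x, z, y, by ext t; simp; tauto, h2, h3'⟩
  · exact absurd h3' (not_lt.mpr (by linarith))
  · exact ⟨z, x, y, by ext t; simp; tauto, h2, h1⟩
  · exact ⟨y, x, z, by ext t; simp; tauto, h1, h2⟩
  · exact absurd h3' (not_lt.mpr (by linarith))
  · exact ⟨y, z, x, by ext t; simp; tauto, h3', h2⟩
  · exact ⟨z, y, x, by ext t; simp; tauto, h3', h1⟩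

end Aux
namespace Aux
open Hard Finset

variable {q nd : ℕ} (τv : Fin (2 * q) → Fin q × Fin q × Fin q)
variable {K : ℕ} (round : Idx q nd → Fin K)

lemma mem_S {r : Fin K} {idx : Idx q nd} :
    idx ∈ (Finset.univ.filter fun idx => round idx = r) ↔ round idx = r := by simp

lemma dummy_unique (hq : 1 ≤ q) (r : Fin K)
    (hr : Hard.FeasibleRound q (Hard.jobOf q nd τv)
      (Finset.univ.filter fun idx => round idx = r))
    {d1 d2 : Fin nd} (h1 : round (.dummy d1) = r) (h2 : round (.dummy d2) = r) :
    d1 = d2 := by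
  have hγ := gamma_pos (q := q) hq
  by_contra hne
  have hne' : (Idx.dummy d1 : Idx q nd) ≠ .dummy d2 := by simp [hne]
  have hsum := round_sum_le τv round hq r hr (k := 1) (by norm_num) (by linarith)
    {.dummy d1, .dummy d2}
    (by intro i hi
        simp only [Finset.mem_insert, Finset.mem_singleton] at hi
        rcases hi with rfl | rfl
        · exact h1
        · exact h2)
    (by intro i hi
        simp only [Finset.mem_insert, Finset.mem_singleton] at hi
        rcases hi with rfl | rfl <;> exact uses_E1 τv hq (Or.inr trivial))
  rw [Finset.sum_pair hne'] at hsum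
  have e1 : (Hard.jobOf q nd τv (.dummy d1)).d = 2997 * γ q := rfl
  have e2 : (Hard.jobOf q nd τv (.dummy d2)).d = 2997 * γ q := rfl
  rw [e1, e2] at hsum
  linarith

lemma card_le_three_of_dummy (hq : 1 ≤ q) (r : Fin K)
    (hr : Hard.FeasibleRound q (Hard.jobOf q nd τv)
      (Finset.univ.filter fun idx => round idx = r))
    {dm : Fin nd} (hdm : round (.dummy dm) = r) :
    (Finset.univ.filter fun idx => round idx = r).card ≤ 3 := by
  have hγ := gamma_pos (q := q) hq
  set S := Finset.univ.filter fun idx => round idx = r with hS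
  set Lf := S.filter Idx.inAB with hLf
  set Rf := S.filter Idx.inA'B' with hRf
  set DU := S.filter Idx.isDummy with hDU
  have hLfS : ∀ x ∈ Lf, round x = r ∧ x.inAB := by
    intro x hx
    rw [hLf, Finset.mem_filter] at hx
    exact ⟨(mem_S round).mp hx.1, hx.2⟩
  have hRfS : ∀ x ∈ Rf, round x = r ∧ x.inA'B' := by
    intro x hx
    rw [hRf, Finset.mem_filter] at hx
    exact ⟨(mem_S round).mp hx.1, hx.2⟩
  -- Lf has at most one job
  have hdmL : (Idx.dummy dm : Idx q nd) ∉ Lf := by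
    intro hmem
    exact (hLfS _ hmem).2
  have hsumL := round_sum_le τv round hq r hr (k := 1) (by norm_num) (by linarith)
    (insert (.dummy dm) Lf)
    (by intro i hi
        rcases Finset.mem_insert.mp hi with rfl | hi'
        · exact hdm
        · exact (hLfS _ hi').1)
    (by intro i hi
        rcases Finset.mem_insert.mp hi with rfl | hi'
        · exact uses_E1 τv hq (Or.inr trivial)
        · exact uses_E1 τv hq (Or.inl (hLfS _ hi').2))
  rw [Finset.sum_insert hdmL] at hsumL
  have eDm : (Hard.jobOf q nd τv (.dummy dm)).d = 2997 * γ q := rfl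
  rw [eDm] at hsumL
  have hlowL : (Lf.card : ℤ) * (999 * γ q) ≤ ∑ idx ∈ Lf, (Hard.jobOf q nd τv idx).d := by
    have := Finset.card_nsmul_le_sum Lf (fun idx => (Hard.jobOf q nd τv idx).d)
      (999 * γ q) (fun i hi => (dem_left_ge τv hq (hLfS _ hi).2).1)
    simpa [nsmul_eq_mul] using this
  have hL1 : Lf.card ≤ 1 := by
    by_contra hc
    push_neg at hc
    have : (2:ℤ) ≤ (Lf.card : ℤ) := by exact_mod_cast hc
    nlinarith
  -- Rf has at most one job
  have hdmR : (Idx.dummy dm : Idx q nd) ∉ Rf := by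
    intro hmem
    exact (hRfS _ hmem).2
  have hsumR := round_sum_le τv round hq r hr (k := 40000 * γ q) (by linarith) (le_refl _)
    (insert (.dummy dm) Rf)
    (by intro i hi
        rcases Finset.mem_insert.mp hi with rfl | hi'
        · exact hdm
        · exact (hRfS _ hi').1)
    (by intro i hi
        rcases Finset.mem_insert.mp hi with rfl | hi'
        · exact uses_E2 τv hq (Or.inr trivial)
        · exact uses_E2 τv hq (Or.inl (hRfS _ hi').2))
  rw [Finset.sum_insert hdmR, eDm] at hsumR
  have hlowR : (Rf.card : ℤ) * (997 * γ q) ≤ ∑ idx ∈ Rf, (Hard.jobOf q nd τv idx).d := by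
    have := Finset.card_nsmul_le_sum Rf (fun idx => (Hard.jobOf q nd τv idx).d)
      (997 * γ q) (fun i _ => dem_ge τv hq i)
    simpa [nsmul_eq_mul] using this
  have hR1 : Rf.card ≤ 1 := by
    by_contra hc
    push_neg at hc
    have : (2:ℤ) ≤ (Rf.card : ℤ) := by exact_mod_cast hc
    nlinarith
  -- DU is a singleton at most
  have hDU1 : DU ⊆ {.dummy dm} := by
    intro x hx
    rw [hDU, Finset.mem_filter] at hx
    rcases x with i|i|j|j|k|k|l|l|d <;> simp only [Idx.isDummy] at hx
    · exact absurd hx.2 (by simp)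
    · exact absurd hx.2 (by simp)
    · exact absurd hx.2 (by simp)
    · exact absurd hx.2 (by simp)
    · exact absurd hx.2 (by simp)
    · exact absurd hx.2 (by simp)
    · exact absurd hx.2 (by simp)
    · exact absurd hx.2 (by simp)
    · have := dummy_unique τv round hq r hr ((mem_S round).mp hx.1) hdm
      simp [this]
  have hDUcard : DU.card ≤ 1 := le_trans (Finset.card_le_card hDU1) (by simp)
  -- S is covered
  have hcover : S ⊆ Lf ∪ Rf ∪ DU := by
    intro x hx
    rcases class_total x with h | h | h
    · exact Finset.mem_union_left _ (Finset.mem_union_left _ (Finset.mem_filter.mpr ⟨hx, h⟩))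
    · exact Finset.mem_union_left _ (Finset.mem_union_right _ (Finset.mem_filter.mpr ⟨hx, h⟩))
    · exact Finset.mem_union_right _ (Finset.mem_filter.mpr ⟨hx, h⟩)
  calc S.card ≤ (Lf ∪ Rf ∪ DU).card := Finset.card_le_card hcover
    _ ≤ (Lf ∪ Rf).card + DU.card := Finset.card_union_le _ _
    _ ≤ Lf.card + Rf.card + DU.card := by
        have := Finset.card_union_le Lf Rf
        omega
    _ ≤ 3 := by omega

lemma card_le_eight (hq : 1 ≤ q) (r : Fin K)
    (hr : Hard.FeasibleRound q (Hard.jobOf q nd τv)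
      (Finset.univ.filter fun idx => round idx = r)) :
    (Finset.univ.filter fun idx => round idx = r).card ≤ 8 := by
  have hγ := gamma_pos (q := q) hq
  set S := Finset.univ.filter fun idx => round idx = r with hS
  set Lf := S.filter Idx.inAB with hLf
  set Rf := S.filter Idx.inA'B' with hRf
  set DU := S.filter Idx.isDummy with hDU
  have hLfS : ∀ x ∈ Lf, round x = r ∧ x.inAB := by
    intro x hx
    rw [hLf, Finset.mem_filter] at hx
    exact ⟨(mem_S round).mp hx.1, hx.2⟩
  have hRfS : ∀ x ∈ Rf, round x = r ∧ x.inA'B' := by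
    intro x hx
    rw [hRf, Finset.mem_filter] at hx
    exact ⟨(mem_S round).mp hx.1, hx.2⟩
  have hDUS : ∀ x ∈ DU, round x = r ∧ x.isDummy := by
    intro x hx
    rw [hDU, Finset.mem_filter] at hx
    exact ⟨(mem_S round).mp hx.1, hx.2⟩
  have hdisjL : Disjoint Lf DU := by
    rw [Finset.disjoint_left]
    intro x hxL hxD
    have h1 := (hLfS _ hxL).2
    have h2 := (hDUS _ hxD).2
    rcases x with i|i|j|j|k|k|l|l|d <;> simp [Idx.inAB, Idx.isDummy] at h1 h2
  have hdisjR : Disjoint Rf DU := by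
    rw [Finset.disjoint_left]
    intro x hxR hxD
    have h1 := (hRfS _ hxR).2
    have h2 := (hDUS _ hxD).2
    rcases x with i|i|j|j|k|k|l|l|d <;> simp [Idx.inA'B', Idx.isDummy] at h1 h2
  have hcard4L : (Lf ∪ DU).card ≤ 4 := by
    apply round_card_le_four τv round hq r hr (k := 1) (by norm_num) (by linarith)
    · intro i hi
      rcases Finset.mem_union.mp hi with hi' | hi'
      · exact (hLfS _ hi').1
      · exact (hDUS _ hi').1
    · intro i hi
      rcases Finset.mem_union.mp hi with hi' | hi'
      · exact uses_E1 τv hq (Or.inl (hLfS _ hi').2)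
      · exact uses_E1 τv hq (Or.inr (hDUS _ hi').2)
  have hcard4R : (Rf ∪ DU).card ≤ 4 := by
    apply round_card_le_four τv round hq r hr (k := 40000 * γ q) (by linarith) (le_refl _)
    · intro i hi
      rcases Finset.mem_union.mp hi with hi' | hi'
      · exact (hRfS _ hi').1
      · exact (hDUS _ hi').1
    · intro i hi
      rcases Finset.mem_union.mp hi with hi' | hi'
      · exact uses_E2 τv hq (Or.inl (hRfS _ hi').2)
      · exact uses_E2 τv hq (Or.inr (hDUS _ hi').2)
  rw [Finset.card_union_of_disjoint hdisjL] at hcard4L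
  rw [Finset.card_union_of_disjoint hdisjR] at hcard4R
  have hcover : S ⊆ Lf ∪ Rf ∪ DU := by
    intro x hx
    rcases class_total x with h | h | h
    · exact Finset.mem_union_left _ (Finset.mem_union_left _ (Finset.mem_filter.mpr ⟨hx, h⟩))
    · exact Finset.mem_union_left _ (Finset.mem_union_right _ (Finset.mem_filter.mpr ⟨hx, h⟩))
    · exact Finset.mem_union_right _ (Finset.mem_filter.mpr ⟨hx, h⟩)
  have h1 : S.card ≤ Lf.card + Rf.card + DU.card := by
    calc S.card ≤ (Lf ∪ Rf ∪ DU).card := Finset.card_le_card hcover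
      _ ≤ (Lf ∪ Rf).card + DU.card := Finset.card_union_le _ _
      _ ≤ Lf.card + Rf.card + DU.card := by
          have := Finset.card_union_le Lf Rf
          omega
  omega

end Aux
namespace Aux
open Hard Finset

variable {q nd : ℕ} (τv : Fin (2 * q) → Fin q × Fin q × Fin q)

lemma inAB_split (x : Idx q nd) : x.inAB ↔ x.inA ∨ x.inB := by
  rcases x with i|i|j|j|k|k|l|l|d <;> simp [Idx.inAB, Idx.inA, Idx.inB]

lemma inA'B'_split (x : Idx q nd) : x.inA'B' ↔ x.inA' ∨ x.inB' := by
  rcases x with i|i|j|j|k|k|l|l|d <;> simp [Idx.inA'B', Idx.inA', Idx.inB']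

lemma inB_eq {x : Idx q nd} (h : x.inB) : ∃ l, x = .b l := by
  rcases x with i|i|j|j|k|k|l|l|d <;> simp [Idx.inB] at h
  exact ⟨l, rfl⟩

lemma inB'_eq {x : Idx q nd} (h : x.inB') : ∃ l, x = .b' l := by
  rcases x with i|i|j|j|k|k|l|l|d <;> simp [Idx.inB'] at h
  exact ⟨l, rfl⟩

lemma isDummy_eq {x : Idx q nd} (h : x.isDummy) : ∃ d, x = .dummy d := by
  rcases x with i|i|j|j|k|k|l|l|d <;> simp [Idx.isDummy] at h
  exact ⟨d, rfl⟩

lemma notA_of_inB' {x : Idx q nd} (h : x.inB') : ¬ x.inA := by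
  rcases x with i|i|j|j|k|k|l|l|d <;> simp [Idx.inB', Idx.inA] at h ⊢

lemma notA_of_inA' {x : Idx q nd} (h : x.inA') : ¬ x.inA := by
  rcases x with i|i|j|j|k|k|l|l|d <;> simp [Idx.inA', Idx.inA] at h ⊢

lemma dd_bounds {x : Idx q nd} (h : x.inA) : 1 ≤ dd x ∧ dd x ≤ 4 := by
  rcases x with i|i|j|j|k|k|l|l|d <;> simp [Idx.inA] at h <;> simp [dd]

lemma val_nonneg_AB {x : Idx q nd} (hq : 1 ≤ q) (h : x.inAB) : 0 ≤ val τv x := by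
  have hγ := gamma_pos (q := q) hq
  rcases (inAB_split x).mp h with h' | h'
  · linarith [(val_inA τv (Or.inl h') hq).1]
  · linarith [(val_inB τv (Or.inl h')).1]

lemma val_le_gamma {x : Idx q nd} (hq : 1 ≤ q) (h : x.inA ∨ x.inA') :
    1 ≤ val τv x ∧ val τv x ≤ γ q := by
  obtain ⟨h1, h2⟩ := val_inA τv h hq
  exact ⟨h1, by linarith⟩

lemma finish3 {x y z : Idx q nd} (t0 : Fin q × Fin q × Fin q)
    (hx : dd x = 1) (hy : dd y = 2) (hz : dd z = 4)
    (hA : da x + da y + da z = ((t0.1 : ℕ) : ℤ) + 1)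
    (hB : db x + db y + db z = ((t0.2.1 : ℕ) : ℤ) + 1)
    (hC : dc x + dc y + dc z = ((t0.2.2 : ℕ) : ℤ) + 1) :
    x = .aX t0.1 ∧ y = .aY t0.2.1 ∧ z = .aZ t0.2.2 := by
  obtain ⟨i1, rfl⟩ := dd_eq_one hx
  obtain ⟨j1, rfl⟩ := dd_eq_two hy
  obtain ⟨k1, rfl⟩ := dd_eq_four hz
  have ea1 : da (Idx.aX i1 : Idx q nd) = ((i1:ℕ):ℤ) + 1 := rfl
  have ea2 : da (Idx.aY j1 : Idx q nd) = 0 := rfl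
  have ea3 : da (Idx.aZ k1 : Idx q nd) = 0 := rfl
  have eb1 : db (Idx.aX i1 : Idx q nd) = 0 := rfl
  have eb2 : db (Idx.aY j1 : Idx q nd) = ((j1:ℕ):ℤ) + 1 := rfl
  have eb3 : db (Idx.aZ k1 : Idx q nd) = 0 := rfl
  have ec1 : dc (Idx.aX i1 : Idx q nd) = 0 := rfl
  have ec2 : dc (Idx.aY j1 : Idx q nd) = 0 := rfl
  have ec3 : dc (Idx.aZ k1 : Idx q nd) = ((k1:ℕ):ℤ) + 1 := rfl
  rw [ea1, ea2, ea3] at hA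
  rw [eb1, eb2, eb3] at hB
  rw [ec1, ec2, ec3] at hC
  refine ⟨?_, ?_, ?_⟩
  · have : (i1:ℕ) = (t0.1:ℕ) := by exact_mod_cast (by linarith : ((i1:ℕ):ℤ) = ((t0.1:ℕ):ℤ))
    rw [Fin.ext this]
  · have : (j1:ℕ) = (t0.2.1:ℕ) := by exact_mod_cast (by linarith : ((j1:ℕ):ℤ) = ((t0.2.1:ℕ):ℤ))
    rw [Fin.ext this]
  · have : (k1:ℕ) = (t0.2.2:ℕ) := by exact_mod_cast (by linarith : ((k1:ℕ):ℤ) = ((t0.2.2:ℕ):ℤ))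
    rw [Fin.ext this]

end Aux
namespace Aux
open Hard Finset

variable {q nd : ℕ} (τv : Fin (2 * q) → Fin q × Fin q × Fin q)
variable {K : ℕ} (round : Idx q nd → Fin K)

set_option maxHeartbeats 3200000 in
lemma good_of_eight (hq : 1 ≤ q) (r : Fin K)
    (hr : Hard.FeasibleRound q (Hard.jobOf q nd τv)
      (Finset.univ.filter fun idx => round idx = r))
    (h8 : (Finset.univ.filter fun idx => round idx = r).card = 8) :
    ∃ l : Fin (2 * q), round (.b l) = r ∧ round (.aX (τv l).1) = r ∧
      round (.aY (τv l).2.1) = r ∧ round (.aZ (τv l).2.2) = r := by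
  have hγ := gamma_pos (q := q) hq
  have hρpos : (0:ℤ) < ρ q := by have := rho_ge (q := q) hq; linarith
  set S := Finset.univ.filter fun idx => round idx = r with hS
  set Lf := S.filter Idx.inAB with hLfdef
  set Rf := S.filter Idx.inA'B' with hRfdef
  set LA := S.filter Idx.inA with hLAdef
  set LB := S.filter Idx.inB with hLBdef
  set RA := S.filter Idx.inA' with hRAdef
  set RB := S.filter Idx.inB' with hRBdef
  have hmem : ∀ x : Idx q nd, x ∈ S ↔ round x = r := fun x => mem_S round
  have hLfS : ∀ x ∈ Lf, round x = r ∧ x.inAB := fun x hx => by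
    rw [hLfdef, Finset.mem_filter] at hx; exact ⟨(hmem _).mp hx.1, hx.2⟩
  have hRfS : ∀ x ∈ Rf, round x = r ∧ x.inA'B' := fun x hx => by
    rw [hRfdef, Finset.mem_filter] at hx; exact ⟨(hmem _).mp hx.1, hx.2⟩
  have hLAS : ∀ x ∈ LA, round x = r ∧ x.inA := fun x hx => by
    rw [hLAdef, Finset.mem_filter] at hx; exact ⟨(hmem _).mp hx.1, hx.2⟩
  have hLBS : ∀ x ∈ LB, round x = r ∧ x.inB := fun x hx => by
    rw [hLBdef, Finset.mem_filter] at hx; exact ⟨(hmem _).mp hx.1, hx.2⟩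
  have hRAS : ∀ x ∈ RA, round x = r ∧ x.inA' := fun x hx => by
    rw [hRAdef, Finset.mem_filter] at hx; exact ⟨(hmem _).mp hx.1, hx.2⟩
  have hRBS : ∀ x ∈ RB, round x = r ∧ x.inB' := fun x hx => by
    rw [hRBdef, Finset.mem_filter] at hx; exact ⟨(hmem _).mp hx.1, hx.2⟩
  -- no dummies in this round
  have hnodummy : ∀ d0 : Fin nd, (Idx.dummy d0 : Idx q nd) ∉ S := by
    intro d0 hd0
    have h3 := card_le_three_of_dummy τv round hq r hr ((hmem _).mp hd0)
    rw [← hS] at h3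
    omega
  -- left and right families have exactly 4 jobs
  have hLf4 : Lf.card ≤ 4 := by
    apply round_card_le_four τv round hq r hr (k := 1) (by norm_num) (by linarith)
    · exact fun x hx => (hLfS x hx).1
    · exact fun x hx => uses_E1 τv hq (Or.inl (hLfS x hx).2)
  have hRf4 : Rf.card ≤ 4 := by
    apply round_card_le_four τv round hq r hr (k := 40000 * γ q) (by linarith) (le_refl _)
    · exact fun x hx => (hRfS x hx).1
    · exact fun x hx => uses_E2 τv hq (Or.inl (hRfS x hx).2)
  have hcover : S ⊆ Lf ∪ Rf := by
    intro x hx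
    rcases class_total x with h | h | h
    · exact Finset.mem_union_left _ (Finset.mem_filter.mpr ⟨hx, h⟩)
    · exact Finset.mem_union_right _ (Finset.mem_filter.mpr ⟨hx, h⟩)
    · obtain ⟨d0, rfl⟩ := isDummy_eq h
      exact absurd hx (hnodummy d0)
  have h8' : 8 ≤ Lf.card + Rf.card := by
    calc 8 = S.card := h8.symm
      _ ≤ (Lf ∪ Rf).card := Finset.card_le_card hcover
      _ ≤ Lf.card + Rf.card := Finset.card_union_le _ _
  have hLf4' : Lf.card = 4 := by omega
  have hRf4' : Rf.card = 4 := by omega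
  -- splitting
  have hunionL : LA ∪ LB = Lf := by
    ext x
    simp only [hLAdef, hLBdef, hLfdef, Finset.mem_union, Finset.mem_filter]
    rw [inAB_split]
    tauto
  have hdisjL : Disjoint LA LB := by
    rw [Finset.disjoint_left]
    intro x hxA hxB
    have h1 := (hLAS _ hxA).2
    have h2 := (hLBS _ hxB).2
    rcases x with i|i|j|j|k|k|l|l|d <;> simp [Idx.inA, Idx.inB] at h1 h2
  have hunionR : RA ∪ RB = Rf := by
    ext x
    simp only [hRAdef, hRBdef, hRfdef, Finset.mem_union, Finset.mem_filter]
    rw [inA'B'_split]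
    tauto
  have hdisjR : Disjoint RA RB := by
    rw [Finset.disjoint_left]
    intro x hxA hxB
    have h1 := (hRAS _ hxA).2
    have h2 := (hRBS _ hxB).2
    rcases x with i|i|j|j|k|k|l|l|d <;> simp [Idx.inA', Idx.inB'] at h1 h2
  have hcardL : LA.card + LB.card = 4 := by
    rw [← Finset.card_union_of_disjoint hdisjL, hunionL]; exact hLf4'
  have hcardR : RA.card + RB.card = 4 := by
    rw [← Finset.card_union_of_disjoint hdisjR, hunionR]; exact hRf4'
  -- edge-1 demand sum over Lf
  have hsumLf : ∑ x ∈ Lf, (Hard.jobOf q nd τv x).d ≤ 4000 * γ q := by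
    apply round_sum_le τv round hq r hr (k := 1) (by norm_num) (by linarith)
    · exact fun x hx => (hLfS x hx).1
    · exact fun x hx => uses_E1 τv hq (Or.inl (hLfS x hx).2)
  have hsumLf' : 4 * 999 * γ q + 4 * ∑ x ∈ Lf, val τv x ≤ 4000 * γ q := by
    have he : ∑ x ∈ Lf, (Hard.jobOf q nd τv x).d
        = ∑ x ∈ Lf, (999 * γ q + 4 * val τv x) :=
      Finset.sum_congr rfl fun x hx => (dem_left_ge τv hq (hLfS x hx).2).2
    rw [he, Finset.sum_add_distrib, Finset.sum_const, hLf4', ← Finset.mul_sum] at hsumLf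
    simp only [nsmul_eq_mul] at hsumLf
    push_cast at hsumLf
    linarith

  -- LB has at most one job
  have hLB1 : LB.card ≤ 1 := by
    by_contra hc
    push_neg at hc
    obtain ⟨e1m, he1, e2m, he2, hne⟩ := Finset.one_lt_card.mp hc
    have hLBsub : LB ⊆ Lf := by
      rw [← hunionL]; exact Finset.subset_union_right
    have hsub : {e1m, e2m} ⊆ Lf := by
      intro x hx
      simp only [Finset.mem_insert, Finset.mem_singleton] at hx
      rcases hx with rfl | rfl
      · exact hLBsub he1
      · exact hLBsub he2
    have hps : ∑ x ∈ ({e1m, e2m} : Finset (Idx q nd)), val τv x ≤ ∑ x ∈ Lf, val τv x := by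
      apply Finset.sum_le_sum_of_subset_of_nonneg hsub
      exact fun x hx _ => val_nonneg_AB τv hq (hLfS x hx).2
    rw [Finset.sum_pair hne] at hps
    have hv1 := (val_inB τv (Or.inl (hLBS _ he1).2)).1
    have hv2 := (val_inB τv (Or.inl (hLBS _ he2).2)).1
    linarith
  -- right-side demand sum
  have hsumRf : ∑ x ∈ Rf, (Hard.jobOf q nd τv x).d ≤ 4000 * γ q := by
    apply round_sum_le τv round hq r hr (k := 20001 * γ q) (by linarith) (by linarith)
    · exact fun x hx => (hRfS x hx).1
    · intro x hx
      rcases (inA'B'_split x).mp (hRfS x hx).2 with h | h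
      · exact uses_E4_A' τv hq h
      · exact uses_E4_B' τv hq h
  have hsumRf' : γ q ≤ ∑ x ∈ Rf, val τv x := by
    have he : ∑ x ∈ Rf, (Hard.jobOf q nd τv x).d
        = ∑ x ∈ Rf, (1001 * γ q - 4 * val τv x) :=
      Finset.sum_congr rfl fun x hx => dem_right_eq τv (hRfS x hx).2
    rw [he, Finset.sum_sub_distrib, Finset.sum_const, hRf4', ← Finset.mul_sum] at hsumRf
    simp only [nsmul_eq_mul] at hsumRf
    push_cast at hsumRf
    linarith
  -- RB is nonempty
  have hRB1' : 1 ≤ RB.card := by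
    by_contra hc
    push_neg at hc
    have hRB0 : RB = ∅ := Finset.card_eq_zero.mp (by omega)
    have hRfRA : Rf = RA := by rw [← hunionR, hRB0, Finset.union_empty]
    have hbig : ∑ x ∈ Rf, 16 * val τv x ≤ ∑ _x ∈ Rf, γ q := by
      apply Finset.sum_le_sum
      intro x hx
      have hxA : x.inA' := by
        rw [hRfRA] at hx
        exact (hRAS _ hx).2
      exact (val_inA τv (Or.inr hxA) hq).2
    rw [Finset.sum_const, hRf4', ← Finset.mul_sum] at hbig
    simp only [nsmul_eq_mul] at hbig
    push_cast at hbig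
    linarith
  -- LA and RB cannot exceed 4 together
  have hdisjLARB : Disjoint LA RB := by
    rw [Finset.disjoint_left]
    intro x hxA hxB
    exact notA_of_inB' (hRBS _ hxB).2 (hLAS _ hxA).2
  have hLARB : LA.card + RB.card ≤ 4 := by
    have h4 : (LA ∪ RB).card ≤ 4 := by
      apply round_card_le_four τv round hq r hr (k := 19500 * γ q) (by linarith) (by linarith)
      · intro x hx
        rcases Finset.mem_union.mp hx with h | h
        · exact (hLAS _ h).1
        · exact (hRBS _ h).1
      · intro x hx
        rcases Finset.mem_union.mp hx with h | h
        · exact uses_E3_A τv hq (hLAS _ h).2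
        · exact uses_E3_B' τv hq (hRBS _ h).2
    rwa [Finset.card_union_of_disjoint hdisjLARB] at h4
  have hLAc : LA.card = 3 := by omega
  have hLBc : LB.card = 1 := by omega
  have hRAc : RA.card = 3 := by omega
  have hRBc : RB.card = 1 := by omega
  -- extract the b job and the b' job
  obtain ⟨eb, heb⟩ := Finset.card_eq_one.mp hLBc
  have hebS : eb ∈ LB := by rw [heb]; exact Finset.mem_singleton_self eb
  obtain ⟨l, hebl⟩ := inB_eq (hLBS _ hebS).2
  have hbl : round (.b l : Idx q nd) = r := by rw [← hebl]; exact (hLBS _ hebS).1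
  obtain ⟨eb', heb'⟩ := Finset.card_eq_one.mp hRBc
  have hebS' : eb' ∈ RB := by rw [heb']; exact Finset.mem_singleton_self eb'
  obtain ⟨m, hebm⟩ := inB'_eq (hRBS _ hebS').2
  have hbm : round (.b' m : Idx q nd) = r := by rw [← hebm]; exact (hRBS _ hebS').1
  have hvbl : val τv (.b l : Idx q nd) = τ' q (τv l) := rfl
  have hvbm : val τv (.b' m : Idx q nd) = τ' q (τv m) := rfl
  have htl := ht (q := q) (τv l)
  have htm := ht (q := q) (τv m)
  -- τ'(τv m) ≤ τ'(τv l)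
  have hτml : τ' q (τv m) ≤ τ' q (τv l) := by
    by_contra hcon
    push_neg at hcon
    have hblLA : (Idx.b l : Idx q nd) ∉ LA := by
      intro hmem
      exact absurd (hLAS _ hmem).2 (by simp [Idx.inA])
    have hbmLA : (Idx.b' m : Idx q nd) ∉ LA := by
      intro hmem
      exact absurd (hLAS _ hmem).2 (by simp [Idx.inA])
    have hblbm : (Idx.b l : Idx q nd) ∉ insert (Idx.b' m : Idx q nd) LA := by
      intro hmem
      rcases Finset.mem_insert.mp hmem with h | h
      · exact absurd h (by simp)
      · exact hblLA h
    have hcard5 : (insert (Idx.b l : Idx q nd) (insert (Idx.b' m : Idx q nd) LA)).card = 5 := by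
      rw [Finset.card_insert_of_notMem hblbm, Finset.card_insert_of_notMem hbmLA, hLAc]
    have h4 : (insert (Idx.b l : Idx q nd) (insert (Idx.b' m : Idx q nd) LA)).card ≤ 4 := by
      apply round_card_le_four τv round hq r hr (k := 19001 * γ q - 4 * τ' q (τv l))
        (by linarith) (by linarith)
      · intro x hx
        rcases Finset.mem_insert.mp hx with rfl | hx'
        · exact hbl
        · rcases Finset.mem_insert.mp hx' with rfl | hx''
          · exact hbm
          · exact (hLAS _ hx'').1
      · intro x hx
        rcases Finset.mem_insert.mp hx with rfl | hx'
        · rw [job_inB τv (by simp [Idx.inB] : (Idx.b l : Idx q nd).inB), hvbl]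
          exact ⟨by show (0:ℤ) < _; linarith, le_refl _⟩
        · rcases Finset.mem_insert.mp hx' with rfl | hx''
          · rw [job_inB' τv (by simp [Idx.inB'] : (Idx.b' m : Idx q nd).inB'), hvbm]
            exact ⟨by show 19001 * γ q - 4 * τ' q (τv m) < _; linarith,
              by show _ ≤ 40000 * γ q; linarith⟩
          · have hv := val_inA τv (Or.inl (hLAS _ hx'').2) hq
            rw [job_inA τv (hLAS _ hx'').2]
            exact ⟨by show (0:ℤ) < _; linarith,
              by show _ ≤ 20000 * γ q - 4 * val τv x; linarith⟩
    omega
  -- sum decompositions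
  have hsplitL : ∑ x ∈ Lf, val τv x = (∑ x ∈ LA, val τv x) + τ' q (τv l) := by
    rw [← hunionL, Finset.sum_union hdisjL, heb, Finset.sum_singleton, hebl, hvbl]
  have hsplitR : ∑ x ∈ Rf, val τv x = (∑ x ∈ RA, val τv x) + τ' q (τv m) := by
    rw [← hunionR, Finset.sum_union hdisjR, heb', Finset.sum_singleton, hebm, hvbm]
  have hL_le : (∑ x ∈ LA, val τv x) + τ' q (τv l) ≤ γ q := by
    rw [← hsplitL]; linarith
  have hR_ge : γ q ≤ (∑ x ∈ RA, val τv x) + τ' q (τv m) := by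
    rw [← hsplitR]; linarith
  -- dominance
  have hdom : ∀ u : ℤ, 1 ≤ u → u ≤ γ q →
      (LA.filter fun x => val τv x < u).card ≤ (RA.filter fun x => val τv x < u).card := by
    intro u hu1 hu2
    have hd1 : Disjoint (LA.filter fun x => val τv x < u)
        (RA.filter fun x => ¬ val τv x < u) := by
      rw [Finset.disjoint_left]
      intro x hx1 hx2
      exact notA_of_inA' (hRAS _ (Finset.mem_of_mem_filter _ hx2)).2
        (hLAS _ (Finset.mem_of_mem_filter _ hx1)).2
    have hd2 : (Idx.b' m : Idx q nd) ∉
        (LA.filter fun x => val τv x < u) ∪ (RA.filter fun x => ¬ val τv x < u) := by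
      intro hmem
      rcases Finset.mem_union.mp hmem with h | h
      · exact absurd (hLAS _ (Finset.mem_of_mem_filter _ h)).2 (by simp [Idx.inA])
      · exact absurd (hRAS _ (Finset.mem_of_mem_filter _ h)).2 (by simp [Idx.inA'])
    have h4 : (insert (Idx.b' m : Idx q nd)
        ((LA.filter fun x => val τv x < u) ∪ (RA.filter fun x => ¬ val τv x < u))).card ≤ 4 := by
      apply round_card_le_four τv round hq r hr (k := 20000 * γ q - 4 * u + 1)
        (by linarith) (by linarith)
      · intro x hx
        rcases Finset.mem_insert.mp hx with rfl | hx'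
        · exact hbm
        · rcases Finset.mem_union.mp hx' with h | h
          · exact (hLAS _ (Finset.mem_of_mem_filter _ h)).1
          · exact (hRAS _ (Finset.mem_of_mem_filter _ h)).1
      · intro x hx
        rcases Finset.mem_insert.mp hx with rfl | hx'
        · exact uses_E6_B' τv hq (by simp [Idx.inB']) hu1 hu2
        · rcases Finset.mem_union.mp hx' with h | h
          · exact uses_E6_A τv hq (hLAS _ (Finset.mem_of_mem_filter _ h)).2 hu1 hu2
              (Finset.mem_filter.mp h).2
          · exact uses_E6_A' τv hq (hRAS _ (Finset.mem_of_mem_filter _ h)).2 hu1 hu2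
              (not_lt.mp (Finset.mem_filter.mp h).2)
    rw [Finset.card_insert_of_notMem hd2, Finset.card_union_of_disjoint hd1] at h4
    have hfc := Finset.card_filter_add_card_filter_not
      (s := RA) (p := fun x => val τv x < u)
    rw [hRAc] at hfc
    omega
  -- sorted listings
  have hinjL : ∀ a ∈ LA, ∀ b ∈ LA, val τv a = val τv b → a = b :=
    fun a ha b hb h => val_inj_A τv (hLAS _ ha).2 (hLAS _ hb).2 h
  have hinjR : ∀ a ∈ RA, ∀ b ∈ RA, val τv a = val τv b → a = b :=
    fun a ha b hb h => val_inj_A' τv (hRAS _ ha).2 (hRAS _ hb).2 h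
  obtain ⟨a1, a2, a3, hLAeq, h12, h23⟩ := exists_sorted3 LA (val τv) hLAc hinjL
  obtain ⟨c1, c2, c3, hRAeq, g12, g23⟩ := exists_sorted3 RA (val τv) hRAc hinjR
  have ha1m : a1 ∈ LA := by rw [hLAeq]; simp
  have ha2m : a2 ∈ LA := by rw [hLAeq]; simp
  have ha3m : a3 ∈ LA := by rw [hLAeq]; simp
  have hc1m : c1 ∈ RA := by rw [hRAeq]; simp
  have hc2m : c2 ∈ RA := by rw [hRAeq]; simp
  have hc3m : c3 ∈ RA := by rw [hRAeq]; simp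
  have hne12 : a1 ≠ a2 := fun h => by rw [h] at h12; exact lt_irrefl _ h12
  have hne13 : a1 ≠ a3 := fun h => by rw [h] at h12; exact absurd h23 (by linarith)
  have hne23 : a2 ≠ a3 := fun h => by rw [h] at h23; exact lt_irrefl _ h23
  -- pointwise domination of sorted values
  have hb1 : val τv c1 ≤ val τv a1 := by
    by_contra hcon
    push_neg at hcon
    obtain ⟨hu1, hu2⟩ := val_le_gamma τv hq (Or.inr (hRAS _ hc1m).2)
    have hd := hdom (val τv c1) hu1 hu2
    have hL1 : 0 < (LA.filter fun x => val τv x < val τv c1).card :=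
      Finset.card_pos.mpr ⟨a1, Finset.mem_filter.mpr ⟨ha1m, hcon⟩⟩
    have hR0 : (RA.filter fun x => val τv x < val τv c1).card = 0 := by
      rw [Finset.card_eq_zero, Finset.filter_eq_empty_iff]
      intro x hx
      rw [hRAeq] at hx
      simp only [Finset.mem_insert, Finset.mem_singleton] at hx
      rcases hx with rfl | rfl | rfl
      · exact lt_irrefl _
      · intro h; linarith
      · intro h; linarith
    omega
  have hb2 : val τv c2 ≤ val τv a2 := by
    by_contra hcon
    push_neg at hcon
    obtain ⟨hu1, hu2⟩ := val_le_gamma τv hq (Or.inr (hRAS _ hc2m).2)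
    have hd := hdom (val τv c2) hu1 hu2
    have hL2 : 1 < (LA.filter fun x => val τv x < val τv c2).card :=
      Finset.one_lt_card.mpr ⟨a1, Finset.mem_filter.mpr ⟨ha1m, by linarith⟩,
        a2, Finset.mem_filter.mpr ⟨ha2m, hcon⟩, hne12⟩
    have hR1 : (RA.filter fun x => val τv x < val τv c2).card ≤ 1 := by
      have hsub : (RA.filter fun x => val τv x < val τv c2) ⊆ {c1} := by
        intro x hx
        obtain ⟨hx1, hx2⟩ := Finset.mem_filter.mp hx
        rw [hRAeq] at hx1
        simp only [Finset.mem_insert, Finset.mem_singleton] at hx1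
        rcases hx1 with rfl | rfl | rfl
        · exact Finset.mem_singleton_self _
        · exact absurd hx2 (lt_irrefl _)
        · exact absurd hx2 (by push_neg; linarith)
      exact le_trans (Finset.card_le_card hsub) (by simp)
    omega
  have hb3 : val τv c3 ≤ val τv a3 := by
    by_contra hcon
    push_neg at hcon
    obtain ⟨hu1, hu2⟩ := val_le_gamma τv hq (Or.inr (hRAS _ hc3m).2)
    have hd := hdom (val τv c3) hu1 hu2
    have hL3 : 3 ≤ (LA.filter fun x => val τv x < val τv c3).card := by
      have hsub : LA ⊆ (LA.filter fun x => val τv x < val τv c3) := by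
        intro x hx
        refine Finset.mem_filter.mpr ⟨hx, ?_⟩
        rw [hLAeq] at hx
        simp only [Finset.mem_insert, Finset.mem_singleton] at hx
        rcases hx with rfl | rfl | rfl
        · linarith
        · linarith
        · exact hcon
      calc 3 = LA.card := hLAc.symm
        _ ≤ _ := Finset.card_le_card hsub
    have hR2 : (RA.filter fun x => val τv x < val τv c3).card ≤ 2 := by
      have hsub : (RA.filter fun x => val τv x < val τv c3) ⊆ {c1, c2} := by
        intro x hx
        obtain ⟨hx1, hx2⟩ := Finset.mem_filter.mp hx
        rw [hRAeq] at hx1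
        simp only [Finset.mem_insert, Finset.mem_singleton] at hx1
        rcases hx1 with rfl | rfl | rfl
        · simp
        · simp
        · exact absurd hx2 (lt_irrefl _)
      refine le_trans (Finset.card_le_card hsub) ?_
      refine le_trans (Finset.card_insert_le _ _) ?_
      simp
    omega
  -- explicit sums
  have ha1n : a1 ∉ ({a2, a3} : Finset (Idx q nd)) := by simp [hne12, hne13]
  have ha2n : a2 ∉ ({a3} : Finset (Idx q nd)) := by simp [hne23]
  have hsumLA : ∑ x ∈ LA, val τv x = val τv a1 + val τv a2 + val τv a3 := by
    rw [hLAeq]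
    rw [show ({a1, a2, a3} : Finset (Idx q nd)) = insert a1 {a2, a3} from rfl]
    rw [Finset.sum_insert ha1n, Finset.sum_insert ha2n, Finset.sum_singleton]
    ring
  have hgne12 : c1 ≠ c2 := fun h => by rw [h] at g12; exact lt_irrefl _ g12
  have hgne13 : c1 ≠ c3 := fun h => by rw [h] at g12; exact absurd g23 (by linarith)
  have hgne23 : c2 ≠ c3 := fun h => by rw [h] at g23; exact lt_irrefl _ g23
  have hc1n : c1 ∉ ({c2, c3} : Finset (Idx q nd)) := by simp [hgne12, hgne13]
  have hc2n : c2 ∉ ({c3} : Finset (Idx q nd)) := by simp [hgne23]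
  have hsumRA : ∑ x ∈ RA, val τv x = val τv c1 + val τv c2 + val τv c3 := by
    rw [hRAeq]
    rw [show ({c1, c2, c3} : Finset (Idx q nd)) = insert c1 {c2, c3} from rfl]
    rw [Finset.sum_insert hc1n, Finset.sum_insert hc2n, Finset.sum_singleton]
    ring
  -- the key equality
  have hkey : val τv a1 + val τv a2 + val τv a3 + τ' q (τv l) = γ q := by
    rw [hsumLA] at hL_le
    rw [hsumRA] at hR_ge
    linarith
  -- digit analysis
  have hτexp : γ q - τ' q (τv l)
      = ((((τv l).2.2 : ℕ) : ℤ) + 1) * (ρ q)^3 + ((((τv l).2.1 : ℕ) : ℤ) + 1) * (ρ q)^2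
        + ((((τv l).1 : ℕ) : ℤ) + 1) * (ρ q) + 7 := by
    unfold τ' γ
    push_cast
    ring
  have hrep1 := val_repr τv (hLAS _ ha1m).2
  have hrep2 := val_repr τv (hLAS _ ha2m).2
  have hrep3 := val_repr τv (hLAS _ ha3m).2
  have hqZ : (1:ℤ) ≤ (q:ℤ) := by exact_mod_cast hq
  have hρq : ρ q = 32 * (q:ℤ) := rfl
  have hρ32 := rho_ge (q := q) hq
  have hIb : 1 ≤ ((((τv l).1 : ℕ) : ℤ) + 1) ∧ ((((τv l).1 : ℕ) : ℤ) + 1) ≤ (q:ℤ) := by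
    constructor
    · omega
    · exact_mod_cast Nat.succ_le_of_lt ((τv l).1).isLt
  have hJb : 1 ≤ ((((τv l).2.1 : ℕ) : ℤ) + 1) ∧ ((((τv l).2.1 : ℕ) : ℤ) + 1) ≤ (q:ℤ) := by
    constructor
    · omega
    · exact_mod_cast Nat.succ_le_of_lt ((τv l).2.1).isLt
  have hKb : 1 ≤ ((((τv l).2.2 : ℕ) : ℤ) + 1) ∧ ((((τv l).2.2 : ℕ) : ℤ) + 1) ≤ (q:ℤ) := by
    constructor
    · omega
    · exact_mod_cast Nat.succ_le_of_lt ((τv l).2.2).isLt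
  have hdd1b := dd_bounds (hLAS _ ha1m).2
  have hdd2b := dd_bounds (hLAS _ ha2m).2
  have hdd3b := dd_bounds (hLAS _ ha3m).2
  have hda1 := da_bounds a1
  have hda2 := da_bounds a2
  have hda3 := da_bounds a3
  have hdb1 := db_bounds a1
  have hdb2 := db_bounds a2
  have hdb3 := db_bounds a3
  have hdc1 := dc_bounds a1
  have hdc2 := dc_bounds a2
  have hdc3 := dc_bounds a3
  have heq : (dd a1 + dd a2 + dd a3 - 7)
      + (da a1 + da a2 + da a3 - (((((τv l).1 : ℕ) : ℤ)) + 1)) * ρ q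
      + (db a1 + db a2 + db a3 - (((((τv l).2.1 : ℕ) : ℤ)) + 1)) * (ρ q)^2
      + (dc a1 + dc a2 + dc a3 - (((((τv l).2.2 : ℕ) : ℤ)) + 1)) * (ρ q)^3 = 0 := by
    linear_combination hkey + hτexp - hrep1 - hrep2 - hrep3
  have h0b : |dd a1 + dd a2 + dd a3 - 7| < ρ q := by
    rw [abs_lt]
    constructor <;> [skip; skip] <;> linarith
  have h1b : |da a1 + da a2 + da a3 - (((((τv l).1 : ℕ) : ℤ)) + 1)| < ρ q := by
    rw [abs_lt, hρq]
    constructor <;> linarith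
  have h2b : |db a1 + db a2 + db a3 - (((((τv l).2.1 : ℕ) : ℤ)) + 1)| < ρ q := by
    rw [abs_lt, hρq]
    constructor <;> linarith
  obtain ⟨hD, hA, hB, hC⟩ := digits4 hρpos h0b h1b h2b heq
  have hdd1 := dd_inA (hLAS _ ha1m).2
  have hdd2 := dd_inA (hLAS _ ha2m).2
  have hdd3 := dd_inA (hLAS _ ha3m).2
  rcases hdd1 with h1 | h1 | h1 <;> rcases hdd2 with h2 | h2 | h2 <;>
    rcases hdd3 with h3 | h3 | h3
  · exfalso; omega
  · exfalso; omega
  · exfalso; omega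
  · exfalso; omega
  · exfalso; omega
  · obtain ⟨hx', hy', hz'⟩ := finish3 (q := q) (nd := nd) (τv l) h1 h2 h3
      (by linarith) (by linarith) (by linarith)
    exact ⟨l, hbl, by rw [← hx']; exact (hLAS _ ha1m).1,
      by rw [← hy']; exact (hLAS _ ha2m).1, by rw [← hz']; exact (hLAS _ ha3m).1⟩
  · exfalso; omega
  · obtain ⟨hx', hy', hz'⟩ := finish3 (q := q) (nd := nd) (τv l) h1 h3 h2
      (by linarith) (by linarith) (by linarith)
    exact ⟨l, hbl, by rw [← hx']; exact (hLAS _ ha1m).1,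
      by rw [← hy']; exact (hLAS _ ha3m).1, by rw [← hz']; exact (hLAS _ ha2m).1⟩
  · exfalso; omega
  · exfalso; omega
  · exfalso; omega
  · obtain ⟨hx', hy', hz'⟩ := finish3 (q := q) (nd := nd) (τv l) h2 h1 h3
      (by linarith) (by linarith) (by linarith)
    exact ⟨l, hbl, by rw [← hx']; exact (hLAS _ ha2m).1,
      by rw [← hy']; exact (hLAS _ ha1m).1, by rw [← hz']; exact (hLAS _ ha3m).1⟩
  · exfalso; omega
  · exfalso; omega
  · exfalso; omega
  · obtain ⟨hx', hy', hz'⟩ := finish3 (q := q) (nd := nd) (τv l) h3 h1 h2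
      (by linarith) (by linarith) (by linarith)
    exact ⟨l, hbl, by rw [← hx']; exact (hLAS _ ha3m).1,
      by rw [← hy']; exact (hLAS _ ha1m).1, by rw [← hz']; exact (hLAS _ ha2m).1⟩
  · exfalso; omega
  · exfalso; omega
  · exfalso; omega
  · obtain ⟨hx', hy', hz'⟩ := finish3 (q := q) (nd := nd) (τv l) h2 h3 h1
      (by linarith) (by linarith) (by linarith)
    exact ⟨l, hbl, by rw [← hx']; exact (hLAS _ ha2m).1,
      by rw [← hy']; exact (hLAS _ ha3m).1, by rw [← hz']; exact (hLAS _ ha1m).1⟩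
  · exfalso; omega
  · obtain ⟨hx', hy', hz'⟩ := finish3 (q := q) (nd := nd) (τv l) h3 h2 h1
      (by linarith) (by linarith) (by linarith)
    exact ⟨l, hbl, by rw [← hx']; exact (hLAS _ ha3m).1,
      by rw [← hy']; exact (hLAS _ ha2m).1, by rw [← hz']; exact (hLAS _ ha1m).1⟩
  · exfalso; omega
  · exfalso; omega
  · exfalso; omega
  · exfalso; omega
  · exfalso; omega

end Aux
namespace Aux
open Hard Finset

def idxEquiv (q nd : ℕ) :
    Idx q nd ≃ (Fin q ⊕ Fin q ⊕ Fin q ⊕ Fin q ⊕ Fin q ⊕ Fin q ⊕ Fin (2*q) ⊕ Fin (2*q) ⊕ Fin nd) where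
  toFun := fun x => match x with
    | .aX i => Sum.inl i
    | .aX' i => Sum.inr (Sum.inl i)
    | .aY j => Sum.inr (Sum.inr (Sum.inl j))
    | .aY' j => Sum.inr (Sum.inr (Sum.inr (Sum.inl j)))
    | .aZ k => Sum.inr (Sum.inr (Sum.inr (Sum.inr (Sum.inl k))))
    | .aZ' k => Sum.inr (Sum.inr (Sum.inr (Sum.inr (Sum.inr (Sum.inl k)))))
    | .b l => Sum.inr (Sum.inr (Sum.inr (Sum.inr (Sum.inr (Sum.inr (Sum.inl l))))))
    | .b' l => Sum.inr (Sum.inr (Sum.inr (Sum.inr (Sum.inr (Sum.inr (Sum.inr (Sum.inl l)))))))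
    | .dummy d => Sum.inr (Sum.inr (Sum.inr (Sum.inr (Sum.inr (Sum.inr (Sum.inr (Sum.inr d)))))))
  invFun := fun x => match x with
    | Sum.inl i => .aX i
    | Sum.inr (Sum.inl i) => .aX' i
    | Sum.inr (Sum.inr (Sum.inl j)) => .aY j
    | Sum.inr (Sum.inr (Sum.inr (Sum.inl j))) => .aY' j
    | Sum.inr (Sum.inr (Sum.inr (Sum.inr (Sum.inl k)))) => .aZ k
    | Sum.inr (Sum.inr (Sum.inr (Sum.inr (Sum.inr (Sum.inl k))))) => .aZ' k
    | Sum.inr (Sum.inr (Sum.inr (Sum.inr (Sum.inr (Sum.inr (Sum.inl l)))))) => .b l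
    | Sum.inr (Sum.inr (Sum.inr (Sum.inr (Sum.inr (Sum.inr (Sum.inr (Sum.inl l))))))) => .b' l
    | Sum.inr (Sum.inr (Sum.inr (Sum.inr (Sum.inr (Sum.inr (Sum.inr (Sum.inr d))))))) => .dummy d
  left_inv := by rintro (i|i|j|j|k|k|l|l|d) <;> rfl
  right_inv := by rintro (i|i|j|j|k|k|l|(l|d)) <;> rfl

lemma card_idx (q nd : ℕ) : Fintype.card (Idx q nd) = 10 * q + nd := by
  rw [Fintype.card_congr (idxEquiv q nd)]
  simp only [Fintype.card_sum, Fintype.card_fin]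
  omega

lemma beta_le (q : ℕ) : Hard.betaN q ≤ q := by
  unfold Hard.betaN
  have h1 : (⌈(0.979338843 : ℚ) * q⌉ : ℤ) ≤ (q : ℤ) := by
    apply Int.ceil_le.mpr
    push_cast
    nlinarith [Nat.cast_nonneg (α := ℚ) q]
  omega

end Aux
set_option maxHeartbeats 1600000 in
set_option maxRecDepth 4000 in
/-- If every matching of the 2-bounded 3-dimensional matching instance
has size less than `α(q)`, then every Round-UFP packing of all jobs of the hard instance
uses at least `(5q − 3β(q)) + (β(q) − α(q))/7` rounds. -/
theorem hard_instance_lower_bound (q : ℕ) (hq : 1 ≤ q)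
    (τ : Fin (2 * q) → Fin q × Fin q × Fin q) (hτ : Hard.Is2B3DM q τ)
    (hM : ∀ M : Finset (Fin (2 * q)), Hard.IsMatching q τ M → M.card < Hard.alphaN q)
    (K : ℕ) (round : Idx q (Hard.ndN q) → Fin K)
    (hround : ∀ r : Fin K,
      Hard.FeasibleRound q (Hard.jobOf q (Hard.ndN q) τ)
        (Finset.univ.filter fun idx => round idx = r)) :
    (5 * (q : ℚ) - 3 * (Hard.betaN q : ℚ))
        + ((Hard.betaN q : ℚ) - (Hard.alphaN q : ℚ)) / 7 ≤ (K : ℚ) := by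
  -- the number of dummy jobs
  have hβ : Hard.betaN q ≤ q := Aux.beta_le q
  have hnd : Hard.ndN q = 5 * q - 4 * Hard.betaN q := rfl
  have hndZ : ((Hard.ndN q) : ℤ) = 5 * (q : ℤ) - 4 * (Hard.betaN q : ℤ) := by
    rw [hnd]
    have : 4 * Hard.betaN q ≤ 5 * q := by omega
    push_cast [this]
    ring
  -- α is positive
  have hα1 : 1 ≤ Hard.alphaN q := by
    have := hM ∅ (by intro l hl; exact absurd hl (Finset.notMem_empty l))
    exact (by simpa using this : 0 < Hard.alphaN q)
  -- total job count
  have htotal : ∑ r : Fin K, (Finset.univ.filter fun idx => round idx = r).card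
      = 10 * q + Hard.ndN q := by
    rw [← Aux.card_idx q (Hard.ndN q), ← Finset.card_univ]
    exact (Finset.card_eq_sum_card_fiberwise (fun x _ => Finset.mem_univ (round x))).symm
  -- the dummy rounds
  set Dm : Finset (Fin K) :=
    Finset.univ.filter (fun r => ∃ d0 : Fin (Hard.ndN q), round (.dummy d0) = r) with hDmdef
  have hinjdummy : Function.Injective (fun d0 : Fin (Hard.ndN q) => round (.dummy d0)) := by
    intro d1 d2 h
    exact Aux.dummy_unique τ round hq (round (.dummy d2)) (hround _) h rfl
  have hDmimage : Dm = Finset.univ.image (fun d0 : Fin (Hard.ndN q) => round (.dummy d0)) := by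
    ext r
    simp [hDmdef]
  have hDmcard : Dm.card = Hard.ndN q := by
    rw [hDmimage, Finset.card_image_of_injective _ hinjdummy, Finset.card_univ,
      Fintype.card_fin]
  -- the full rounds
  set G : Finset (Fin K) :=
    Finset.univ.filter (fun r => (Finset.univ.filter fun idx => round idx = r).card = 8)
    with hGdef
  -- per-round card bound
  have hbound : ∀ r : Fin K,
      ((Finset.univ.filter fun idx => round idx = r).card : ℤ)
        ≤ 7 + (if r ∈ G then (1:ℤ) else 0) - (if r ∈ Dm then (4:ℤ) else 0) := by
    intro r
    by_cases hd : r ∈ Dm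
    · obtain ⟨d0, hd0⟩ := (Finset.mem_filter.mp hd).2
      have h3 := Aux.card_le_three_of_dummy τ round hq r (hround r) hd0
      split_ifs <;> push_cast <;> omega
    · by_cases hg : r ∈ G
      · have h8 := (Finset.mem_filter.mp hg).2
        split_ifs <;> push_cast <;> omega
      · have h8 := Aux.card_le_eight τ round hq r (hround r)
        have hne8 : (Finset.univ.filter fun idx => round idx = r).card ≠ 8 := by
          intro h
          exact hg (Finset.mem_filter.mpr ⟨Finset.mem_univ r, h⟩)
        split_ifs <;> push_cast <;> omega
  -- sum the bound
  have hsumbound : (10 * (q:ℤ) + ((Hard.ndN q):ℤ)) ≤ 7 * K + G.card - 4 * Dm.card := by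
    have h1 : (10 * (q:ℤ) + ((Hard.ndN q):ℤ))
        = ∑ r : Fin K, ((Finset.univ.filter fun idx => round idx = r).card : ℤ) := by
      rw [← Nat.cast_sum, htotal]
      push_cast
      ring
    have h2 : ∑ r : Fin K, ((Finset.univ.filter fun idx => round idx = r).card : ℤ)
        ≤ ∑ r : Fin K, (7 + (if r ∈ G then (1:ℤ) else 0) - (if r ∈ Dm then (4:ℤ) else 0)) :=
      Finset.sum_le_sum (fun r _ => hbound r)
    have h3 : ∑ r : Fin K, (7 + (if r ∈ G then (1:ℤ) else 0) - (if r ∈ Dm then (4:ℤ) else 0))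
        = 7 * K + G.card - 4 * Dm.card := by
      rw [Finset.sum_sub_distrib, Finset.sum_add_distrib, Finset.sum_const,
        Finset.sum_ite_mem, Finset.sum_ite_mem, Finset.univ_inter, Finset.univ_inter,
        Finset.sum_const, Finset.sum_const, Finset.card_univ, Fintype.card_fin]
      simp only [nsmul_eq_mul]
      push_cast
      ring
    rw [h1]
    rw [h3] at h2
    exact h2
  -- extract a matching from the full rounds
  have hq2 : 0 < 2 * q := by omega
  have hGood : ∀ r ∈ G, ∃ l : Fin (2 * q), round (.b l) = r ∧ round (.aX (τ l).1) = r ∧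
      round (.aY (τ l).2.1) = r ∧ round (.aZ (τ l).2.2) = r := by
    intro r hr
    exact Aux.good_of_eight τ round hq r (hround r) (Finset.mem_filter.mp hr).2
  set pick : Fin K → Fin (2 * q) := fun r =>
    if h : ∃ l : Fin (2 * q), round (.b l) = r ∧ round (.aX (τ l).1) = r ∧
      round (.aY (τ l).2.1) = r ∧ round (.aZ (τ l).2.2) = r then h.choose else ⟨0, hq2⟩
    with hpickdef
  have hpick : ∀ r ∈ G, round (.b (pick r)) = r ∧ round (.aX (τ (pick r)).1) = r ∧
      round (.aY (τ (pick r)).2.1) = r ∧ round (.aZ (τ (pick r)).2.2) = r := by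
    intro r hr
    have h := hGood r hr
    rw [hpickdef]
    simp only [dif_pos h]
    exact h.choose_spec
  set M : Finset (Fin (2 * q)) := G.image pick with hMdef
  have hMcard : M.card = G.card := by
    rw [hMdef]
    apply Finset.card_image_of_injOn
    intro r hr r' hr' hpp
    have h1 := (hpick r hr).1
    have h2 := (hpick r' hr').1
    rw [hpp] at h1
    exact h1.symm.trans h2
  have hmatch : Hard.IsMatching q τ M := by
    intro l hl l' hl' hne
    obtain ⟨r, hrG, hrl⟩ := Finset.mem_image.mp hl
    obtain ⟨r', hrG', hrl'⟩ := Finset.mem_image.mp hl'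
    have hrr : r ≠ r' := by
      intro h
      rw [h] at hrl
      exact hne (hrl.symm.trans hrl')
    have hs := hpick r hrG
    have hs' := hpick r' hrG'
    rw [hrl] at hs
    rw [hrl'] at hs'
    refine ⟨?_, ?_, ?_⟩
    · intro hcoord
      apply hrr
      rw [← hs.2.1, ← hs'.2.1, hcoord]
    · intro hcoord
      apply hrr
      rw [← hs.2.2.1, ← hs'.2.2.1, hcoord]
    · intro hcoord
      apply hrr
      rw [← hs.2.2.2, ← hs'.2.2.2, hcoord]
  have hGα : (G.card : ℤ) ≤ (Hard.alphaN q : ℤ) - 1 := by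
    have h' := hM M hmatch
    rw [hMcard] at h'
    have h'' : (G.card : ℤ) < (Hard.alphaN q : ℤ) := by exact_mod_cast h'
    linarith
  -- final arithmetic
  have hfinal : 35 * (q:ℤ) - 20 * (Hard.betaN q : ℤ) - (Hard.alphaN q : ℤ) + 1
      ≤ 7 * (K : ℤ) := by
    rw [hDmcard] at hsumbound
    linarith [hndZ, hsumbound, hGα]
  have hfinalQ : 35 * (q:ℚ) - 20 * (Hard.betaN q : ℚ) - (Hard.alphaN q : ℚ) + 1
      ≤ 7 * (K : ℚ) := by exact_mod_cast hfinal
  linarith
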